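/- arXiv:1712.03308 — 12 statements merged into one kernel-verified Lean document; each statement's English description precedes it below -/
import Mathlib

section
/- min{𝔡, 𝔯} ≤ non*(Z₀). -/
open Filter Set Cardinal

/-- A set of naturals has asymptotic density zero. -/
def DensityZero (A : Set ℕ) : Prop :=
  Tendsto (fun n : ℕ => ((A ∩ Set.Iio n).ncard : ℝ) / n) atTop (nhds 0)

/-- `non*(Z₀)`: least size of a family of infinite subsets of `ℕ` such that every
density-zero set has finite intersection with some member of the family. -/
noncomputable def nonStarZ0 : Cardinal :=
  sInf { κc : Cardinal | ∃ F : Set (Set ℕ), #F = κc ∧ (∀ a ∈ F, a.Infinite) ∧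
    ∀ b : Set ℕ, DensityZero b → ∃ a ∈ F, (a ∩ b).Finite }

/-- The dominating number `𝔡`. -/
noncomputable def frakD : Cardinal :=
  sInf { κc : Cardinal | ∃ D : Set (ℕ → ℕ), #D = κc ∧
    ∀ f : ℕ → ℕ, ∃ g ∈ D, ∀ᶠ n in atTop, f n ≤ g n }

/-- The reaping number `𝔯`. -/
noncomputable def frakR : Cardinal :=
  sInf { κc : Cardinal | ∃ R : Set (Set ℕ), #R = κc ∧ (∀ a ∈ R, a.Infinite) ∧
    ∀ x : Set ℕ, ∃ a ∈ R, (a \ x).Finite ∨ (a ∩ x).Finite }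

/-!
Let `F` be a family of fewer than `min 𝔡 𝔯` infinite sets; we find a density-zero set meeting
every member of `F` infinitely often. Cut `ℕ` into the dyadic windows `[2^k, 2^(k+1))` and, for
sets `x 0, x 1, …` and a slowly growing `g`, keep in window `k` only the `m` whose lowest `g k`
binary digits spell out which of `x 0, …, x (g k - 1)` contain `k`. At most `2^(k+1-g k)` points
of each window survive, so the kept set has density zero as soon as `g → ∞`.

Since `|F| < 𝔯`, the `x i` can be chosen one after another, each splitting fewer than `𝔯` sets of
windows, so that every `a ∈ F` has, for each `i`, infinitely many windows containing an element of
`a` whose lowest `i` digits are right. Since `|F| < 𝔡`, a single `f` escapes all the functions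
sending `i` to such a window beyond `i`; taking for `g` an inverse of the monotone envelope of `f`
makes the kept set catch an element of `a` in each window that `f` escapes.
-/

def Splits (x s : Set ℕ) : Prop := (s ∩ x).Infinite ∧ (s \ x).Infinite

lemma exists_splits_of_lt_frakR {R : Set (Set ℕ)} (h : #R < frakR) :
    ∃ x, ∀ a ∈ R, a.Infinite → Splits x a := by
  by_contra! hR
  have hreap : frakR ≤ #({a ∈ R | a.Infinite} : Set (Set ℕ)) := by
    refine csInf_le' ⟨_, rfl, fun a ha => ha.2, fun x => ?_⟩
    obtain ⟨a, ha, hinf, hx⟩ := hR x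
    by_cases hax : (a ∩ x).Finite
    · exact ⟨a, ⟨ha, hinf⟩, .inr hax⟩
    · exact ⟨a, ⟨ha, hinf⟩, .inl (not_infinite.mp fun h => hx ⟨hax, h⟩)⟩
  exact h.not_ge (hreap.trans (mk_le_mk_of_subset (sep_subset _ _)))

lemma exists_frequently_lt_of_lt_frakD {D : Set (ℕ → ℕ)} (h : #D < frakD) :
    ∃ f : ℕ → ℕ, ∀ g ∈ D, ∃ᶠ n in atTop, g n < f n := by
  by_contra! hD
  refine h.not_ge (csInf_le' ⟨D, rfl, fun f => ?_⟩)
  obtain ⟨g, hg, hfg⟩ := hD f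
  exact ⟨g, hg, by simpa only [not_frequently, not_lt] using hfg⟩

lemma densityZero_of_eventually_mul_two_pow_le {b : Set ℕ}
    (h : ∀ L : ℕ, ∀ᶠ n in atTop, (b ∩ Iio n).ncard * 2 ^ L ≤ n) : DensityZero b := by
  refine tendsto_order.2 ⟨fun ε hε => Eventually.of_forall fun n => hε.trans_le (by positivity),
    fun ε hε => ?_⟩
  obtain ⟨L, hL⟩ := exists_pow_lt_of_lt_one hε (by norm_num : (1 / 2 : ℝ) < 1)
  filter_upwards [h L, eventually_gt_atTop 0] with n hn hn0
  have hn' : ((b ∩ Iio n).ncard : ℝ) * 2 ^ L ≤ n := by exact_mod_cast hn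
  calc ((b ∩ Iio n).ncard : ℝ) / n ≤ (1 / 2) ^ L := by
        rw [div_le_iff₀ (by positivity), one_div_pow, div_mul_eq_mul_div,
          le_div_iff₀ (by positivity)]
        linarith
    _ < ε := hL

def window (k : ℕ) : Set ℕ := Ico (2 ^ k) (2 ^ (k + 1))

lemma mem_window_log {m : ℕ} (hm : m ≠ 0) : m ∈ window (Nat.log 2 m) :=
  ⟨Nat.pow_log_le_self 2 hm, Nat.lt_pow_succ_log_self one_lt_two m⟩

lemma eq_of_mem_window {m k l : ℕ} (hk : m ∈ window k) (hl : m ∈ window l) : k = l := by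
  have h₁ : k < l + 1 := (Nat.pow_lt_pow_iff_right (by norm_num)).1 (hk.1.trans_lt hl.2)
  have h₂ : l < k + 1 := (Nat.pow_lt_pow_iff_right (by norm_num)).1 (hl.1.trans_lt hk.2)
  omega

lemma ncard_inter_Iio_two_pow_mul_le {b : Set ℕ} {K L : ℕ}
    (h : ∀ k ≥ K, (b ∩ window k).ncard * 2 ^ L ≤ 2 ^ k) :
    ∀ N ≥ K, (b ∩ Iio (2 ^ N)).ncard * 2 ^ L ≤ 2 ^ (K + L) + 2 ^ N := by
  intro N hN
  induction N, hN using Nat.le_induction with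
  | base =>
    have : (b ∩ Iio (2 ^ K)).ncard ≤ 2 ^ K := by
      simpa using ncard_le_ncard (inter_subset_right (s := b)) (finite_Iio (2 ^ K))
    rw [pow_add]
    exact (Nat.mul_le_mul_right _ this).trans (Nat.le_add_right _ _)
  | succ N hN ih =>
    have hsplit : b ∩ Iio (2 ^ (N + 1)) = (b ∩ Iio (2 ^ N)) ∪ (b ∩ window N) := by
      rw [window, ← inter_union_distrib_left,
        Iio_union_Ico_eq_Iio (Nat.pow_le_pow_right two_pos (Nat.le_succ N))]
    have := Nat.mul_le_mul_right (2 ^ L) (ncard_union_le (b ∩ Iio (2 ^ N)) (b ∩ window N))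
    have := h N hN
    rw [hsplit, pow_succ]
    linarith

lemma eventually_ncard_inter_Iio_mul_le {b : Set ℕ}
    (h : ∀ L : ℕ, ∀ᶠ k in atTop, (b ∩ window k).ncard * 2 ^ L ≤ 2 ^ k) (L : ℕ) :
    ∀ᶠ n in atTop, (b ∩ Iio n).ncard * 2 ^ L ≤ n := by
  obtain ⟨K, hK⟩ := eventually_atTop.1 (h (L + 2))
  filter_upwards [eventually_ge_atTop (2 ^ (K + (L + 2)))] with n hn
  set N := Nat.log 2 n + 1
  have hn0 : n ≠ 0 := by have := Nat.two_pow_pos (K + (L + 2)); omega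
  have hNn : 2 ^ N ≤ 2 * n := by
    rw [pow_succ, mul_comm]; exact Nat.mul_le_mul_left 2 (Nat.pow_log_le_self 2 hn0)
  have hKN : K ≤ N := by
    have := Nat.le_log_of_pow_le one_lt_two
      ((Nat.pow_le_pow_right two_pos (Nat.le_add_right K _)).trans hn)
    omega
  have hmono : (b ∩ Iio n).ncard ≤ (b ∩ Iio (2 ^ N)).ncard :=
    ncard_le_ncard (inter_subset_inter_right _
      (Iio_subset_Iio (Nat.lt_pow_succ_log_self one_lt_two n).le)) ((finite_Iio _).inter_of_right _)
  have hdyadic := ncard_inter_Iio_two_pow_mul_le hK N hKN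
  have := Nat.mul_le_mul_right (2 ^ L * 2 ^ 2) hmono
  rw [pow_add _ L 2] at hdyadic
  linarith

/-- The lowest `i` binary digits of `m` record which of the sets `x 0, …, x (i - 1)` contain `k`. -/
def Matches (x : ℕ → Set ℕ) (i k m : ℕ) : Prop := ∀ j < i, (m.testBit j = true ↔ k ∈ x j)

lemma Matches.mono {x : ℕ → Set ℕ} {i i' k m : ℕ} (h : Matches x i k m) (hi : i' ≤ i) :
    Matches x i' k m :=
  fun j hj => h j (hj.trans_le hi)

lemma Matches.mod_two_pow_eq {x : ℕ → Set ℕ} {i k m m' : ℕ} (h : Matches x i k m)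
    (h' : Matches x i k m') : m % 2 ^ i = m' % 2 ^ i := by
  refine Nat.eq_of_testBit_eq fun j => ?_
  simp only [Nat.testBit_mod_two_pow]
  by_cases hj : j < i
  · simp only [hj, decide_true, Bool.true_and]
    exact Bool.eq_iff_iff.2 ((h j hj).trans (h' j hj).symm)
  · simp [hj]

lemma Matches.succ {x : ℕ → Set ℕ} {i k m : ℕ} (h : Matches x i k m)
    (hi : m.testBit i = true ↔ k ∈ x i) : Matches x (i + 1) k m := by
  intro j hj
  rcases Nat.lt_succ_iff_lt_or_eq.1 hj with hj | rfl
  exacts [h j hj, hi]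

lemma matches_congr {x y : ℕ → Set ℕ} {i : ℕ} (hxy : ∀ j < i, x j = y j) (k m : ℕ) :
    Matches x i k m ↔ Matches y i k m :=
  forall₂_congr fun j hj => by rw [hxy j hj]

def matchingSet (g : ℕ → ℕ) (x : ℕ → Set ℕ) : Set ℕ :=
  {m | ∃ k, m ∈ window k ∧ Matches x (g k) k m}

lemma ncard_le_of_mod_two_pow_eq {s : Set ℕ} {n i : ℕ} (hs : s ⊆ Iio (2 ^ n))
    (hmod : ∀ m ∈ s, ∀ m' ∈ s, m % 2 ^ i = m' % 2 ^ i) : s.ncard ≤ 2 ^ (n - i) := by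
  rw [← ncard_Iio_nat (2 ^ (n - i))]
  refine ncard_le_ncard_of_injOn (· / 2 ^ i) (fun m hm => Nat.div_lt_of_lt_mul ?_) ?_
  · calc m < 2 ^ n := hs hm
      _ ≤ 2 ^ i * 2 ^ (n - i) := by rw [← pow_add]; exact Nat.pow_le_pow_right two_pos (by omega)
  · intro m hm m' hm' hdiv
    rw [← Nat.div_add_mod m (2 ^ i), ← Nat.div_add_mod m' (2 ^ i), hmod m hm m' hm']
    exact congrArg (2 ^ i * · + _) hdiv

lemma ncard_matchingSet_inter_window_le (g : ℕ → ℕ) (x : ℕ → Set ℕ) (k : ℕ) :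
    (matchingSet g x ∩ window k).ncard ≤ 2 ^ (k + 1 - g k) := by
  refine ncard_le_of_mod_two_pow_eq (fun m hm => hm.2.2) ?_
  rintro m ⟨⟨l, hl, hm⟩, hk⟩ m' ⟨⟨l', hl', hm'⟩, hk'⟩
  obtain rfl := eq_of_mem_window hl hk
  obtain rfl := eq_of_mem_window hl' hk'
  exact hm.mod_two_pow_eq hm'

lemma densityZero_matchingSet {g : ℕ → ℕ} (hg : Tendsto g atTop atTop) (x : ℕ → Set ℕ) :
    DensityZero (matchingSet g x) := by
  refine densityZero_of_eventually_mul_two_pow_le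
    (eventually_ncard_inter_Iio_mul_le fun L => ?_)
  filter_upwards [hg.eventually_ge_atTop (L + 1), eventually_ge_atTop L] with k hgk hk
  calc (matchingSet g x ∩ window k).ncard * 2 ^ L ≤ 2 ^ (k + 1 - g k) * 2 ^ L :=
        Nat.mul_le_mul_right _ (ncard_matchingSet_inter_window_le g x k)
    _ ≤ 2 ^ k := by rw [← pow_add]; exact Nat.pow_le_pow_right two_pos (by omega)

section Splitting

variable (x : ℕ → Set ℕ) (a : Set ℕ) (i : ℕ)

def matchingWindows : Set ℕ := {k | ∃ m ∈ a ∩ window k, Matches x i k m}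

def matchingWindowsBit (v : Bool) : Set ℕ :=
  {k | ∃ m ∈ a ∩ window k, Matches x i k m ∧ m.testBit i = v}

open Classical in
/-- An infinite set of windows on which the `i`-th digit of the matching elements of `a` is
constant; splitting it by `x i` keeps infinitely many windows matching up to digit `i + 1`. -/
noncomputable def splitTarget : Set ℕ :=
  if (matchingWindowsBit x a i true).Infinite then matchingWindowsBit x a i true
  else matchingWindowsBit x a i false

variable {x a i}

lemma matchingWindows_zero_infinite (ha : a.Infinite) : (matchingWindows x a 0).Infinite := by
  refine infinite_of_forall_exists_gt fun N => ?_
  obtain ⟨m, hma, hm⟩ := ha.exists_gt (2 ^ (N + 1))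
  have hm0 : m ≠ 0 := Nat.ne_zero_of_lt hm
  refine ⟨Nat.log 2 m, ⟨m, ⟨hma, mem_window_log hm0⟩, fun j hj => absurd hj j.not_lt_zero⟩, ?_⟩
  exact Nat.le_log_of_pow_le one_lt_two hm.le

lemma splitTarget_infinite (h : (matchingWindows x a i).Infinite) :
    (splitTarget x a i).Infinite := by
  have hsub : matchingWindows x a i ⊆
      matchingWindowsBit x a i true ∪ matchingWindowsBit x a i false := by
    rintro k ⟨m, hm, hmk⟩
    cases hbit : m.testBit i
    exacts [.inr ⟨m, hm, hmk, hbit⟩, .inl ⟨m, hm, hmk, hbit⟩]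
  unfold splitTarget
  split_ifs with htrue
  · exact htrue
  · exact (infinite_union.1 (h.mono hsub)).resolve_left htrue

lemma matchingWindows_succ_infinite (h : Splits (x i) (splitTarget x a i)) :
    (matchingWindows x a (i + 1)).Infinite := by
  unfold splitTarget at h
  split_ifs at h
  · refine h.1.mono ?_
    rintro k ⟨⟨m, hm, hmk, hbit⟩, hk⟩
    exact ⟨m, hm, hmk.succ (by simp [hbit, hk])⟩
  · refine h.2.mono ?_
    rintro k ⟨⟨m, hm, hmk, hbit⟩, hk⟩
    exact ⟨m, hm, hmk.succ (by simp [hbit, hk])⟩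

lemma splitTarget_congr {y : ℕ → Set ℕ} (hxy : ∀ j < i, x j = y j) :
    splitTarget x a i = splitTarget y a i := by
  have hbit (v : Bool) : matchingWindowsBit x a i v = matchingWindowsBit y a i v := by
    simp only [matchingWindowsBit, matches_congr hxy]
  rw [splitTarget, splitTarget, hbit, hbit]

end Splitting

section Splitters

variable (F : Set (Set ℕ))

noncomputable def nextSplitter (x : ℕ → Set ℕ) (i : ℕ) : Set ℕ :=
  Classical.epsilon fun y => ∀ a ∈ F, (splitTarget x a i).Infinite → Splits y (splitTarget x a i)

noncomputable def splitters (i : ℕ) : Set ℕ :=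
  nextSplitter F (fun j => if j < i then splitters j else ∅) i

lemma nextSplitter_congr {x y : ℕ → Set ℕ} {i : ℕ} (hxy : ∀ j < i, x j = y j) :
    nextSplitter F x i = nextSplitter F y i := by
  simp only [nextSplitter, splitTarget_congr hxy]

lemma splitters_eq_nextSplitter (i : ℕ) : splitters F i = nextSplitter F (splitters F) i := by
  rw [splitters]
  exact nextSplitter_congr F fun j hj => if_pos hj

variable {F}

lemma nextSplitter_spec (hr : #F < frakR) (x : ℕ → Set ℕ) (i : ℕ) :
    ∀ a ∈ F, (splitTarget x a i).Infinite → Splits (nextSplitter F x i) (splitTarget x a i) := by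
  obtain ⟨y, hy⟩ := exists_splits_of_lt_frakR
    (mk_image_le.trans_lt hr : #((splitTarget x · i) '' F) < frakR)
  exact Classical.epsilon_spec (p := fun y => ∀ a ∈ F, (splitTarget x a i).Infinite →
    Splits y (splitTarget x a i)) ⟨y, fun a ha => hy _ (mem_image_of_mem _ ha)⟩

lemma splits_splitters (hr : #F < frakR) {a : Set ℕ} (ha : a ∈ F) {i : ℕ}
    (h : (splitTarget (splitters F) a i).Infinite) :
    Splits (splitters F i) (splitTarget (splitters F) a i) := by
  rw [splitters_eq_nextSplitter]
  exact nextSplitter_spec hr _ _ a ha h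

lemma matchingWindows_splitters_infinite (hr : #F < frakR) {a : Set ℕ} (ha : a ∈ F)
    (hinf : a.Infinite) (i : ℕ) : (matchingWindows (splitters F) a i).Infinite := by
  induction i with
  | zero => exact matchingWindows_zero_infinite hinf
  | succ i ih =>
    exact matchingWindows_succ_infinite (splits_splitters hr ha (splitTarget_infinite ih))

end Splitters

lemma exists_tendsto_atTop_le_of_lt (f : ℕ → ℕ) :
    ∃ g : ℕ → ℕ, Tendsto g atTop atTop ∧ ∀ i k, k < f i → g k ≤ i := by
  set G : ℕ → ℕ := fun i => (Finset.range (i + 1)).sup f + i + 1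
  have hG : Monotone G := fun i i' h => by
    have := Finset.sup_mono (f := f) (Finset.range_subset_range.2 (by omega : i + 1 ≤ i' + 1))
    simp only [G]
    omega
  have hfG (i : ℕ) : f i < G i := by
    have := Finset.le_sup (f := f) (Finset.self_mem_range_succ i)
    simp only [G]
    omega
  have hex (k : ℕ) : ∃ i, k < G i := ⟨k, by simp only [G]; omega⟩
  refine ⟨fun k => Nat.find (hex k), tendsto_atTop_atTop.2 fun L => ⟨G L, fun k hk => ?_⟩,
    fun i k hk => Nat.find_min' _ (hk.trans (hfG i))⟩
  by_contra! hlt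
  exact (Nat.find_spec (hex k)).not_ge ((hG hlt.le).trans hk)

theorem exists_densityZero_inter_infinite {F : Set (Set ℕ)} (hF : ∀ a ∈ F, a.Infinite)
    (hd : #F < frakD) (hr : #F < frakR) :
    ∃ b : Set ℕ, DensityZero b ∧ ∀ a ∈ F, (a ∩ b).Infinite := by
  choose! Ψ hΨ using fun a (ha : a ∈ F) i =>
    (matchingWindows_splitters_infinite hr ha (hF a ha) i).exists_gt i
  obtain ⟨f, hf⟩ := exists_frequently_lt_of_lt_frakD (mk_image_le.trans_lt hd : #(Ψ '' F) < frakD)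
  obtain ⟨g, hg, hgf⟩ := exists_tendsto_atTop_le_of_lt f
  refine ⟨matchingSet g (splitters F), densityZero_matchingSet hg _, fun a ha => ?_⟩
  refine infinite_of_forall_exists_gt fun N => ?_
  obtain ⟨i, hNi, hi⟩ := (hf _ (mem_image_of_mem Ψ ha)).forall_exists_of_atTop N
  obtain ⟨⟨m, ⟨hma, hmk⟩, hm⟩, hik⟩ := hΨ a ha i
  refine ⟨m, ⟨hma, Ψ a i, hmk, hm.mono (hgf i _ hi)⟩, ?_⟩
  calc N ≤ i := hNi
    _ < Ψ a i := hik
    _ < 2 ^ Ψ a i := Nat.lt_two_pow_self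
    _ ≤ m := hmk.1

lemma compl_infinite_of_densityZero {b : Set ℕ} (hb : DensityZero b) : bᶜ.Infinite := by
  intro hfin
  obtain ⟨N, hN⟩ := hfin.bddAbove
  obtain ⟨n, hn, hnN⟩ := ((hb.eventually (gt_mem_nhds one_half_pos)).and
    (eventually_gt_atTop (2 * N + 1))).exists
  have hIco : Ico (N + 1) n ⊆ b ∩ Iio n := fun m hm =>
    ⟨not_not.1 fun hmb => (hN hmb).not_gt hm.1, hm.2⟩
  have hcard := ncard_le_ncard hIco ((finite_Iio n).inter_of_right b)
  have hhalf : (b ∩ Iio n).ncard * 2 < n := by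
    have hn0 : (0 : ℝ) < n := by exact_mod_cast Nat.zero_lt_of_lt hnN
    rw [div_lt_iff₀ hn0] at hn
    exact_mod_cast (by linarith : ((b ∩ Iio n).ncard : ℝ) * 2 < n)
  rw [ncard_Ico_nat] at hcard
  omega

/-- `min {𝔡, 𝔯} ≤ non*(Z₀)`. -/
theorem stmt2 : min frakD frakR ≤ nonStarZ0 := by
  refine le_csInf ⟨_, {a : Set ℕ | a.Infinite}, rfl, fun a ha => ha,
    fun b hb => ⟨bᶜ, compl_infinite_of_densityZero hb, by simp⟩⟩ ?_
  rintro κ ⟨F, rfl, hF, hcover⟩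
  by_contra! hlt
  obtain ⟨b, hb, hhit⟩ := exists_densityZero_inter_infinite hF (lt_min_iff.1 hlt).1
    (lt_min_iff.1 hlt).2
  obtain ⟨a, ha, hfin⟩ := hcover b hb
  exact hhit a ha hfin
end

section
/- min{𝔡, 𝔯} = min{𝔡, 𝔲}. -/
open Filter Set Cardinal

/-- The ultrafilter number `𝔲`: the least cardinality of a base of a
nonprincipal ultrafilter on `ℕ`. -/
noncomputable def frakU : Cardinal :=
  sInf { κc : Cardinal | ∃ (u : Ultrafilter ℕ) (B : Set (Set ℕ)), #B = κc ∧
    (∀ s ∈ u, s.Infinite) ∧ (∀ b ∈ B, b ∈ u) ∧ ∀ s ∈ u, ∃ b ∈ B, b ⊆ s }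

/-!
Since a base of a nonprincipal ultrafilter reaps every set, `𝔯 ≤ 𝔲`. Conversely, let `R` be a
reaping family with `|R| < 𝔡`; `R` is infinite, since a finite family of infinite sets is split by
the union of every other block of a suitable interval partition. For finite `E ⊆ R` let `h_E n` be
a bound such that every member of `E` meets `(n, h_E n)`. As there are only `|R| < 𝔡` such `E`, a
single monotone `b` satisfies `h_E (h_E n) < b n` for infinitely many `n`, for every `E`; then in
the interval partition given by `T (i + 1) = b (b (T i))`, every finite `E` has infinitely many
blocks meeting all its members. Collapsing each block to a point, the images of the members of `R`
together with the cofinite sets generate a filter; it is an ultrafilter because `R` is reaping,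
and it has a base indexed by `[R]^{<ω} × ℕ`, of size `|R|`.
-/

def IsReaping (R : Set (Set ℕ)) : Prop :=
  (∀ a ∈ R, a.Infinite) ∧ ∀ x : Set ℕ, ∃ a ∈ R, (a \ x).Finite ∨ (a ∩ x).Finite

def IsNonprincipalBase (u : Ultrafilter ℕ) (B : Set (Set ℕ)) : Prop :=
  (∀ s ∈ u, s.Infinite) ∧ (∀ b ∈ B, b ∈ u) ∧ ∀ s ∈ u, ∃ b ∈ B, b ⊆ s

lemma frakD_le {D : Set (ℕ → ℕ)} (hD : ∀ f : ℕ → ℕ, ∃ g ∈ D, ∀ᶠ n in atTop, f n ≤ g n) :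
    frakD ≤ #D :=
  csInf_le' ⟨D, rfl, hD⟩

lemma frakR_le {R : Set (Set ℕ)} (hR : IsReaping R) : frakR ≤ #R :=
  csInf_le' ⟨R, rfl, hR⟩

lemma frakU_le {u : Ultrafilter ℕ} {B : Set (Set ℕ)} (hB : IsNonprincipalBase u B) :
    frakU ≤ #B :=
  csInf_le' ⟨u, B, rfl, hB⟩

lemma isNonprincipalBase_hyperfilter :
    IsNonprincipalBase (hyperfilter ℕ) {s | s ∈ hyperfilter ℕ} :=
  ⟨fun _ hs hfin => hfin.notMem_hyperfilter hs, fun _ hb => hb, fun s hs => ⟨s, hs, subset_rfl⟩⟩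

lemma IsNonprincipalBase.isReaping {u : Ultrafilter ℕ} {B : Set (Set ℕ)}
    (hB : IsNonprincipalBase u B) : IsReaping B := by
  obtain ⟨hinf, hmem, hbase⟩ := hB
  refine ⟨fun b hb => hinf b (hmem b hb), fun x => ?_⟩
  rcases u.mem_or_compl_mem x with hx | hx
  · obtain ⟨b, hbB, hbx⟩ := hbase x hx
    exact ⟨b, hbB, Or.inl (by simp [sdiff_eq_empty.2 hbx])⟩
  · obtain ⟨b, hbB, hbx⟩ := hbase xᶜ hx
    exact ⟨b, hbB, Or.inr (by simp [(subset_compl_iff_disjoint_right.1 hbx).inter_eq])⟩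

lemma frakR_le_frakU : frakR ≤ frakU :=
  le_csInf ⟨_, _, _, rfl, isNonprincipalBase_hyperfilter⟩
    fun _ ⟨_, _, hκ, hB⟩ => hκ ▸ frakR_le (IsNonprincipalBase.isReaping hB)

/-- A directed family of infinite sets that decides every set is a base of a nonprincipal
ultrafilter. -/
lemma frakU_le_of_directed {ι : Type} [Nonempty ι] {s : ι → Set ℕ}
    (hdir : Directed (· ≥ ·) s) (hinf : ∀ i, (s i).Infinite)
    (hdec : ∀ x : Set ℕ, ∃ i, s i ⊆ x ∨ s i ⊆ xᶜ) : frakU ≤ #ι := by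
  set F := ⨅ i, 𝓟 (s i)
  have hF := hasBasis_iInf_principal hdir
  have hmem : ∀ x, x ∈ F ↔ ∃ i, s i ⊆ x := fun x => hF.mem_iff.trans (by simp)
  have : F.NeBot := hF.neBot_iff.2 fun {i} _ => (hinf i).nonempty
  have hult : ∀ x, xᶜ ∉ F ↔ x ∈ F := by
    refine fun x => ⟨fun hxc => ?_, compl_notMem⟩
    obtain ⟨i, hi | hi⟩ := hdec x
    · exact (hmem x).2 ⟨i, hi⟩
    · exact absurd ((hmem _).2 ⟨i, hi⟩) hxc
  refine (frakU_le (u := .ofComplNotMemIff F hult) (B := range s)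
    ⟨fun x hx => ?_, ?_, fun x hx => ?_⟩).trans mk_range_le
  · obtain ⟨i, hi⟩ := (hmem x).1 hx
    exact (hinf i).mono hi
  · rintro _ ⟨i, rfl⟩
    exact (hmem _).2 ⟨i, subset_rfl⟩
  · obtain ⟨i, hi⟩ := (hmem x).1 hx
    exact ⟨s i, mem_range_self i, hi⟩

lemma exists_forall_frequently_lt {ι : Type} (g : ι → ℕ → ℕ) (hι : #ι < frakD) :
    ∃ f : ℕ → ℕ, ∀ i, ∃ᶠ n in atTop, g i n < f n := by
  by_contra! hdom
  refine hι.not_ge ((frakD_le (D := range g) fun f => ?_).trans mk_range_le)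
  obtain ⟨i, hi⟩ := hdom f
  exact ⟨g i, mem_range_self i, hi⟩

lemma exists_monotone_lt_and_le (f : ℕ → ℕ) :
    ∃ b : ℕ → ℕ, Monotone b ∧ ∀ n, n < b n ∧ f n ≤ b n := by
  refine ⟨fun n => n + 1 + ∑ k ∈ Finset.range (n + 1), f k, fun m n hmn => ?_, fun n => ?_⟩
  · dsimp only
    gcongr
  · have := Finset.single_le_sum (fun k _ => Nat.zero_le (f k)) (Finset.self_mem_range_succ n)
    simp only
    omega

lemma exists_Ici_inter_subset_of_finite_diff {y x : Set ℕ} (h : (y \ x).Finite) :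
    ∃ n, Ici n ∩ y ⊆ x := by
  obtain ⟨n, hn⟩ := h.bddAbove
  refine ⟨n + 1, fun m ⟨hm, hmy⟩ => by_contra fun hmx => ?_⟩
  have := hn ⟨hmy, hmx⟩
  simp only [mem_Ici] at hm
  omega

section Hitting

variable {ι : Type*} (A : ι → Set ℕ) (E : Finset ι)

noncomputable def hitBound (n : ℕ) : ℕ :=
  sInf {m | n < m ∧ ∀ k ∈ E, ∃ p ∈ A k, n < p ∧ p < m}

variable {A E}

lemma hitBound_spec (hA : ∀ k ∈ E, (A k).Infinite) (n : ℕ) :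
    n < hitBound A E n ∧ ∀ k ∈ E, ∃ p ∈ A k, n < p ∧ p < hitBound A E n := by
  choose! p hpA hnp using fun k (hk : k ∈ E) => (hA k hk).exists_gt n
  refine Nat.sInf_mem (s := {m | n < m ∧ ∀ k ∈ E, ∃ p ∈ A k, n < p ∧ p < m})
    ⟨n + 1 + E.sup p, by omega, fun k hk => ⟨p k, hpA k hk, hnp k hk, ?_⟩⟩
  have := Finset.le_sup (f := p) hk
  omega

lemma hitBound_mono (hA : ∀ k ∈ E, (A k).Infinite) : Monotone (hitBound A E) := by
  intro n n' hnn'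
  obtain ⟨hlt, hhit⟩ := hitBound_spec hA n'
  exact Nat.sInf_le ⟨by omega, fun k hk =>
    (hhit k hk).imp fun p ⟨hp, h1, h2⟩ => ⟨hp, by omega, h2⟩⟩

end Hitting

section Blocks

variable {T : ℕ → ℕ}

/-- The index `i` of the block `[T i, T (i + 1))` containing `m`. -/
noncomputable def blockIdx (T : ℕ → ℕ) (m : ℕ) : ℕ := sInf {i | m < T (i + 1)}

lemma blockIdx_eq (hT : StrictMono T) {i m : ℕ} (h1 : T i ≤ m) (h2 : m < T (i + 1)) :
    blockIdx T m = i := by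
  refine le_antisymm (Nat.sInf_le h2) (not_lt.1 fun hlt => ?_)
  have hmem : m < T (blockIdx T m + 1) := Nat.sInf_mem (s := {j | m < T (j + 1)}) ⟨i, h2⟩
  have := hT.monotone (by omega : blockIdx T m + 1 ≤ i)
  omega

lemma exists_block (hT : StrictMono T) (hT0 : T 0 = 0) (n : ℕ) :
    ∃ i, T i ≤ n ∧ n < T (i + 1) := by
  classical
  have hex : ∃ i, n < T (i + 1) := ⟨n, Nat.lt_succ_self n |>.trans_le (hT.id_le _)⟩
  refine ⟨Nat.find hex, ?_, Nat.find_spec hex⟩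
  rcases h : Nat.find hex with _ | i
  · simp [hT0]
  · exact not_lt.1 (Nat.find_min hex (by omega))

variable {ι : Type*} {A : ι → Set ℕ} {E : Finset ι}

lemma exists_mem_blockIdx_eq (hT : StrictMono T) (hA : ∀ k ∈ E, (A k).Infinite) {i s : ℕ}
    (hs : T i ≤ s) (hsT : hitBound A E s ≤ T (i + 1)) :
    ∀ k ∈ E, ∃ p ∈ A k, blockIdx T p = i := fun k hk =>
  let ⟨p, hp, h1, h2⟩ := (hitBound_spec hA s).2 k hk
  ⟨p, hp, blockIdx_eq hT (by omega) (by omega)⟩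

/-- The parity argument: the escape point `n` lies in block `i`, and one of two consecutive hits
of `E` past `T i` or past `b (T i)` falls inside block `i` or block `i + 1`. -/
lemma exists_block_hit {b : ℕ → ℕ} (hb : Monotone b) (hb_gt : ∀ n, n < b n) (hT0 : T 0 = 0)
    (hT_succ : ∀ i, T (i + 1) = b (b (T i))) (hA : ∀ k ∈ E, (A k).Infinite)
    (hfreq : ∃ᶠ n in atTop, hitBound A E (hitBound A E n) < b n) (N : ℕ) :
    ∃ i, N ≤ i ∧ ∀ k ∈ E, ∃ p ∈ A k, blockIdx T p = i := by
  set h := hitBound A E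
  have hT : StrictMono T :=
    strictMono_nat_of_lt_succ fun i => by rw [hT_succ]; exact (hb_gt _).trans (hb_gt _)
  have hh := hitBound_mono hA
  obtain ⟨n, hNn, hn⟩ := frequently_atTop.1 hfreq (T N)
  obtain ⟨i, hin, hni⟩ := exists_block hT hT0 n
  have hNi : N ≤ i := Nat.lt_succ_iff.1 (hT.lt_iff_lt.1 (hNn.trans_lt hni))
  by_cases hfirst : n < b (T i)
  · refine ⟨i, hNi, exists_mem_blockIdx_eq hT hA le_rfl ?_⟩
    calc h (T i) ≤ h (h (T i)) := ((hitBound_spec hA _).1).le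
      _ ≤ h (h n) := hh (hh hin)
      _ ≤ b n := hn.le
      _ ≤ T (i + 1) := by rw [hT_succ]; exact hb hfirst.le
  push Not at hfirst
  by_cases hsecond : h (b (T i)) ≤ T (i + 1)
  · exact ⟨i, hNi, exists_mem_blockIdx_eq hT hA (hb_gt _).le hsecond⟩
  refine ⟨i + 1, by omega, exists_mem_blockIdx_eq hT hA (not_le.1 hsecond).le ?_⟩
  calc h (h (b (T i))) ≤ h (h n) := hh (hh hfirst)
    _ ≤ b n := hn.le
    _ ≤ b (T (i + 1)) := hb hni.le
    _ ≤ T (i + 1 + 1) := by rw [hT_succ (i + 1)]; exact (hb_gt _).le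

end Blocks

lemma IsReaping.infinite {R : Set (Set ℕ)} (hR : IsReaping R) : R.Infinite := by
  intro hfin
  set E := hfin.toFinset
  have hA : ∀ a ∈ E, (id a : Set ℕ).Infinite := fun a ha => hR.1 a (hfin.mem_toFinset.1 ha)
  set T : ℕ → ℕ := fun i => (hitBound id E)^[i] 0
  have hT_succ : ∀ i, T (i + 1) = hitBound id E (T i) :=
    fun i => Function.iterate_succ_apply' _ _ _
  have hT : StrictMono T :=
    strictMono_nat_of_lt_succ fun i => by rw [hT_succ]; exact (hitBound_spec hA _).1
  have hhit : ∀ a ∈ R, ∀ i, ∃ p ∈ a, blockIdx T p = i ∧ i ≤ p := fun a ha i => by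
    obtain ⟨p, hp, h1, h2⟩ := (hitBound_spec hA (T i)).2 a (hfin.mem_toFinset.2 ha)
    exact ⟨p, hp, blockIdx_eq hT h1.le (hT_succ i ▸ h2), (hT.id_le i).trans h1.le⟩
  obtain ⟨a, ha, hsplit | hsplit⟩ := hR.2 {m | Even (blockIdx T m)}
  · refine infinite_of_forall_exists_gt (fun N => ?_) hsplit
    obtain ⟨p, hp, hpi, hle⟩ := hhit a ha (2 * N + 1)
    exact ⟨p, ⟨hp, by simp [hpi]⟩, by omega⟩
  · refine infinite_of_forall_exists_gt (fun N => ?_) hsplit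
    obtain ⟨p, hp, hpi, hle⟩ := hhit a ha (2 * N + 2)
    exact ⟨p, ⟨hp, by simp [hpi, parity_simps]⟩, by omega⟩

lemma IsReaping.exists_finite_image_sdiff {R : Set (Set ℕ)} (hR : IsReaping R) (π : ℕ → ℕ)
    (x : Set ℕ) : ∃ a ∈ R, (π '' a \ x).Finite ∨ (π '' a \ xᶜ).Finite := by
  obtain ⟨a, ha, h | h⟩ := hR.2 (π ⁻¹' x)
  · exact ⟨a, ha, Or.inl (image_sdiff_preimage ▸ h.image π)⟩
  · exact ⟨a, ha, Or.inr (by rw [sdiff_compl, ← image_inter_preimage]; exact h.image π)⟩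

lemma IsReaping.frakU_le_of_lt_frakD {R : Set (Set ℕ)} (hR : IsReaping R) (hRD : #R < frakD) :
    frakU ≤ #R := by
  classical
  have : Infinite R := hR.infinite.to_subtype
  set h : Finset R → ℕ → ℕ := fun E => hitBound (fun a : R => (a : Set ℕ)) E
  have hA : ∀ E : Finset R, ∀ a ∈ E, (a : Set ℕ).Infinite := fun _ a _ => hR.1 a a.2
  obtain ⟨f, hf⟩ := exists_forall_frequently_lt (fun E n => h E (h E n))
    (by rwa [mk_finset_of_infinite])
  obtain ⟨b, hb, hb_bound⟩ := exists_monotone_lt_and_le f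
  set T : ℕ → ℕ := fun i => (b ∘ b)^[i] 0
  have hT_succ : ∀ i, T (i + 1) = b (b (T i)) := fun i => Function.iterate_succ_apply' _ _ _
  set s : Finset R × ℕ → Set ℕ := fun p => Ici p.2 ∩ ⋂ a ∈ p.1, blockIdx T '' a
  have hs_anti : Antitone s := fun p q hpq =>
    inter_subset_inter (Ici_subset_Ici.2 hpq.2) (biInter_subset_biInter_left hpq.1)
  calc frakU ≤ #(Finset R × ℕ) := frakU_le_of_directed hs_anti.directed_ge ?_ ?_
    _ = #R := by
      rw [mk_prod, lift_id, lift_id, mk_finset_of_infinite, mk_nat,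
        mul_aleph0_eq (aleph0_le_mk R)]
  · rintro ⟨E, n⟩
    refine infinite_of_forall_exists_gt fun N => ?_
    obtain ⟨i, hi, hhit⟩ := exists_block_hit hb (fun n => (hb_bound n).1) rfl hT_succ (hA E)
      ((hf E).mono fun n hn => hn.trans_le (hb_bound n).2) (max n (N + 1))
    exact ⟨i, ⟨le_of_max_le_left hi, mem_iInter₂.2 hhit⟩, by omega⟩
  · intro x
    obtain ⟨a, haR, hfin⟩ := hR.exists_finite_image_sdiff (blockIdx T) x
    have hsingle : ∀ n, s ({⟨a, haR⟩}, n) = Ici n ∩ blockIdx T '' a := fun n => by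
      simp only [s, Finset.mem_singleton, iInter_iInter_eq_left]
    rcases hfin with hfin | hfin <;> obtain ⟨n, hn⟩ := exists_Ici_inter_subset_of_finite_diff hfin
    exacts [⟨_, Or.inl (hsingle n ▸ hn)⟩, ⟨_, Or.inr (hsingle n ▸ hn)⟩]

/-- `min {𝔡, 𝔯} = min {𝔡, 𝔲}`. -/
theorem stmt4 : min frakD frakR = min frakD frakU := by
  refine le_antisymm (min_le_min_left _ frakR_le_frakU) (le_min (min_le_left _ _) ?_)
  refine le_csInf ⟨_, _, rfl, isNonprincipalBase_hyperfilter.isReaping⟩ ?_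
  rintro _ ⟨R, rfl, (hR : IsReaping R)⟩
  rcases le_or_gt frakD #R with h | h
  · exact (min_le_left _ _).trans h
  · exact (min_le_right _ _).trans (hR.frakU_le_of_lt_frakD h)
end

section
/- 𝔰(pr) equals the least cardinality of a promptly splitting family, i.e., the least cardinality of a family F ⊆ (P(ℕ))^ω such that every infinite a ⊆ ℕ is promptly split by some member of F. -/
/-!
Splitting partitions and promptly splitting sequences translate into each other without
increasing the size of the family. A partition `⟨P_j⟩` gives the sequence
`x_i = ⋃ {P_j : the i-th binary digit of j is 0}`: each piece `P_j` then lies inside the cell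
`⋂_{i ≤ n} x_i^{σ(i)}` whose pattern `σ` is spelled by the binary digits of `j`, so a partition
splitting `a` promptly splits `a`. Conversely a sequence `X` partitions `ℕ` by the first `i` with
`m ∉ x_i`; the `j`-th piece contains the cell `x_0 ∩ ⋯ ∩ x_{j-1} ∩ x_jᶜ`, so prompt splitting
of `a` by `X` makes this partition split `a`.
-/

open Filter Set Cardinal

/-- `P : ℕ → Set ℕ` is a partition of `ℕ` into pairwise disjoint pieces. -/
def PartitionOfNat (P : ℕ → Set ℕ) : Prop :=
  (∀ i j : ℕ, i ≠ j → Disjoint (P i) (P j)) ∧ (⋃ i, P i) = Set.univ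

/-- A partition splits `a` if every piece meets `a` in an infinite set. -/
def PartSplits (P : ℕ → Set ℕ) (a : Set ℕ) : Prop := ∀ i : ℕ, (P i ∩ a).Infinite

/-- `𝔰(pr)`: the least size of a splitting family of partitions of `ℕ`. -/
noncomputable def sPR : Cardinal :=
  sInf { κc : Cardinal | ∃ F : Set (ℕ → Set ℕ), #F = κc ∧ (∀ P ∈ F, PartitionOfNat P) ∧
    ∀ a : Set ℕ, a.Infinite → ∃ P ∈ F, PartSplits P a }

/-- `x⁰ = x` and `x¹ = ℕ \ x`, with `false` coding `0` and `true` coding `1`. -/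
def SideOf (x : Set ℕ) (b : Bool) : Set ℕ := if b then xᶜ else x

/-- A sequence `X = ⟨x_i : i < ω⟩` of subsets of `ℕ` promptly splits an infinite `a ⊆ ℕ`
if for every `n` and every `σ : {0,…,n} → 2`, `(⋂_{i ≤ n} x_i^{σ(i)}) ∩ a` is infinite. -/
def PromptlySplits (X : ℕ → Set ℕ) (a : Set ℕ) : Prop :=
  ∀ (n : ℕ) (σ : ℕ → Bool),
    ((⋂ i ∈ Finset.range (n + 1), SideOf (X i) (σ i)) ∩ a).Infinite

lemma mem_sideOf {x : Set ℕ} {b : Bool} {m : ℕ} : m ∈ SideOf x b ↔ (m ∈ x ↔ b = false) := by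
  cases b <;> simp [SideOf]

lemma Nat.exists_testBit_eq (σ : ℕ → Bool) (n : ℕ) : ∃ j : ℕ, ∀ i < n, j.testBit i = σ i := by
  refine ⟨∑ i ∈ (Finset.range n).filter (σ ·), 2 ^ i, fun i hi => ?_⟩
  rw [← Bool.coe_iff_coe, ← Nat.mem_bitIndices, ← List.mem_toFinset,
    Finset.toFinset_bitIndices_sum_two_pow]
  simp [hi]

lemma PartitionOfNat.preimage_singleton (f : ℕ → ℕ) : PartitionOfNat (fun j => f ⁻¹' {j}) :=
  ⟨fun _ _ hij => disjoint_singleton.mpr hij |>.preimage f,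
    eq_univ_of_forall fun m => mem_iUnion.mpr ⟨f m, rfl⟩⟩

lemma PartitionOfNat.eq_of_mem {P : ℕ → Set ℕ} (hP : PartitionOfNat P) {m j k : ℕ}
    (hj : m ∈ P j) (hk : m ∈ P k) : j = k := by
  by_contra hne
  exact (hP.1 j k hne).notMem_of_mem_left hj hk

section PromptOfPartition

def promptOf (P : ℕ → Set ℕ) (i : ℕ) : Set ℕ :=
  ⋃ (j : ℕ) (_ : j.testBit i = false), P j

lemma PartitionOfNat.mem_sideOf_promptOf {P : ℕ → Set ℕ} (hP : PartitionOfNat P) {m j i : ℕ}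
    {b : Bool} (hm : m ∈ P j) : m ∈ SideOf (promptOf P i) b ↔ j.testBit i = b := by
  have hmem : m ∈ promptOf P i ↔ j.testBit i = false := by
    simp only [promptOf, mem_iUnion, exists_prop]
    exact ⟨fun ⟨k, hk, hmk⟩ => hP.eq_of_mem hm hmk ▸ hk, fun h => ⟨j, h, hm⟩⟩
  rw [mem_sideOf, hmem]
  cases b <;> simp

lemma PartitionOfNat.promptlySplits_promptOf {P : ℕ → Set ℕ} (hP : PartitionOfNat P)
    {a : Set ℕ} (h : PartSplits P a) : PromptlySplits (promptOf P) a := by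
  intro n σ
  obtain ⟨j, hj⟩ := Nat.exists_testBit_eq σ (n + 1)
  refine (h j).mono ?_
  rintro m ⟨hmP, hma⟩
  refine ⟨?_, hma⟩
  simp only [mem_iInter, Finset.mem_range]
  exact fun i hi => (hP.mem_sideOf_promptOf hmP).mpr (hj i hi)

end PromptOfPartition

section PartitionOfPrompt

open Classical in
noncomputable def firstExit (X : ℕ → Set ℕ) (m : ℕ) : ℕ :=
  if h : ∃ i, m ∉ X i then Nat.find h else 0

lemma firstExit_eq {X : ℕ → Set ℕ} {m j : ℕ} (hin : ∀ i < j, m ∈ X i) (hout : m ∉ X j) :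
    firstExit X m = j := by
  classical
  have h : ∃ i, m ∉ X i := ⟨j, hout⟩
  rw [firstExit, dif_pos h, Nat.find_eq_iff]
  exact ⟨hout, fun i hi => not_not.mpr (hin i hi)⟩

def partOf (X : ℕ → Set ℕ) (j : ℕ) : Set ℕ := firstExit X ⁻¹' {j}

lemma partitionOfNat_partOf (X : ℕ → Set ℕ) : PartitionOfNat (partOf X) :=
  PartitionOfNat.preimage_singleton _

lemma PromptlySplits.partSplits_partOf {X : ℕ → Set ℕ} {a : Set ℕ} (h : PromptlySplits X a) :
    PartSplits (partOf X) a := by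
  intro j
  refine (h j fun i => decide (i = j)).mono ?_
  rintro m ⟨hmX, hma⟩
  refine ⟨?_, hma⟩
  simp only [mem_iInter, Finset.mem_range, mem_sideOf] at hmX
  refine firstExit_eq (fun i hi => ?_) ?_
  · exact (hmX i (by omega)).mpr (by simp [hi.ne])
  · simpa using hmX j (by omega)

end PartitionOfPrompt

/-- `𝔰(pr)` equals the least cardinality of a promptly splitting family. -/
theorem stmt5 :
    sPR = sInf { κc : Cardinal | ∃ F : Set (ℕ → Set ℕ), #F = κc ∧
      ∀ a : Set ℕ, a.Infinite → ∃ X ∈ F, PromptlySplits X a } := by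
  refine csInf_eq_csInf_of_forall_exists_le ?_ ?_
  · rintro _ ⟨F, rfl, hpart, hsplit⟩
    refine ⟨_, ⟨promptOf '' F, rfl, fun a ha => ?_⟩, mk_image_le⟩
    obtain ⟨P, hPF, hP⟩ := hsplit a ha
    exact ⟨promptOf P, mem_image_of_mem _ hPF, (hpart P hPF).promptlySplits_promptOf hP⟩
  · rintro _ ⟨F, rfl, hsplit⟩
    refine ⟨_, ⟨partOf '' F, rfl, ?_, fun a ha => ?_⟩, mk_image_le⟩
    · rintro _ ⟨X, -, rfl⟩
      exact partitionOfNat_partOf X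
    · obtain ⟨X, hXF, hX⟩ := hsplit a ha
      exact ⟨partOf X, mem_image_of_mem _ hXF, hX.partSplits_partOf⟩
end

section
/- If ⟨X_α : α < κ⟩ is a promptly splitting family of sequences of subsets of ℕ, then there exists a tortuous coloring c : κ × ℕ × ℕ → 2. -/
open Filter Set Cardinal

/-- A coloring `c : α × ℕ × ℕ → 2` is tortuous if for every infinite `A ⊆ ℕ` and every
partition of `α` into countably many (possibly empty) pieces, coded by `K : α → ℕ`,
there is `n` such that for every `σ : {0,…,n} → 2` there are `x` in the `n`-th piece
and `k ∈ A` with `k > n` and `σ i = c x k i` for all `i ≤ n`. -/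
def TortuousColoring {α : Type} (c : α → ℕ → ℕ → Bool) : Prop :=
  ∀ A : Set ℕ, A.Infinite → ∀ K : α → ℕ, ∃ n : ℕ, ∀ σ : ℕ → Bool,
    ∃ x : α, K x = n ∧ ∃ k ∈ A, k > n ∧ ∀ i ≤ n, σ i = c x k i

/-- If `⟨X_α : α < κ⟩` is a promptly splitting family, there is a tortuous coloring on `κ`. -/
theorem stmt6 {α : Type} (X : α → ℕ → Set ℕ)
    (hX : ∀ a : Set ℕ, a.Infinite → ∃ i : α, PromptlySplits (X i) a) :
    ∃ c : α → ℕ → ℕ → Bool, TortuousColoring c := by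
  classical
  refine ⟨fun x k i => decide (k ∉ X x i), ?_⟩
  intro A hA K
  obtain ⟨x, hx⟩ := hX A hA
  refine ⟨K x, fun σ => ⟨x, rfl, ?_⟩⟩
  have h := hx (K x) σ
  obtain ⟨k, hk, hgt⟩ := ((h.diff (Set.finite_Icc 0 (K x))).nonempty)
  simp only [Set.mem_diff, Set.mem_Icc, not_and, not_le] at hgt
  refine ⟨k, hk.2, hgt (Nat.zero_le k), fun i hi => ?_⟩
  have hmem : k ∈ ⋂ j ∈ Finset.range (K x + 1), SideOf (X x j) (σ j) := hk.1
  simp only [Set.mem_iInter] at hmem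
  have := hmem i (Finset.mem_range.mpr (Nat.lt_succ_of_le hi))
  unfold SideOf at this
  cases hσ : σ i <;> simp [hσ] at this <;> simp [this]
end

section
/- Let κ be a cardinal and let c : κ × ℕ × ℕ → 2 be a tortuous coloring. Then for every infinite A ⊆ ℕ there exists α < κ such that for every n < ω and every σ : {0,…,n} → 2 there are infinitely many k ∈ A with σ(i) = c(α, k, i) for all i ≤ n. -/
open Filter Set Cardinal

/-!
Suppose no colour `x` works. Then each `x` has a finite pattern `σₓ` on `[0, Mₓ]` that is
matched by no `k ∈ A` beyond `Mₓ`. Put `x` into the piece whose index codes the pair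
`(Mₓ, σₓ)`, with the code at least `Mₓ`. Tortuousness, applied with the pattern decoded from
the piece index, yields `x` and `k ∈ A` above the index matching `σₓ`, a contradiction.
-/

lemma exists_forall_lt_exists_ne_of_finite {A : Set ℕ} {f : ℕ → ℕ → Bool} {σ : ℕ → Bool}
    {n : ℕ} (h : {k | k ∈ A ∧ ∀ i ≤ n, σ i = f k i}.Finite) :
    ∃ M, ∀ k ∈ A, M < k → ∃ i ≤ M, σ i ≠ f k i := by
  obtain ⟨m, hm⟩ := h.bddAbove
  refine ⟨max n m, fun k hkA hk => ?_⟩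
  by_contra! hmatch
  have hkm : k ≤ m := hm ⟨hkA, fun i hi => hmatch i (hi.trans (le_max_left n m))⟩
  omega

lemma exists_prefix_code :
    ∃ (code : ℕ → (ℕ → Bool) → ℕ) (decode : ℕ → ℕ → Bool),
      ∀ M τ, M ≤ code M τ ∧ ∀ i ≤ M, decode (code M τ) i = τ i := by
  refine ⟨fun M τ => Nat.pair M (Encodable.encode ((List.range (M + 1)).map τ)),
    fun N i => ((Encodable.decode N.unpair.2 : Option (List Bool)).getD []).getD i false,
    fun M τ => ⟨Nat.left_le_pair _ _, fun i hi => ?_⟩⟩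
  have hlen : i < ((List.range (M + 1)).map τ).length := by simp; omega
  simp only [Nat.unpair_pair, Encodable.encodek, Option.getD_some,
    List.getD_eq_getElem _ _ hlen, List.getElem_map, List.getElem_range]

lemma TortuousColoring.exists_match {α : Type} {c : α → ℕ → ℕ → Bool}
    (hc : TortuousColoring c) {A : Set ℕ} (hA : A.Infinite) (K : α → ℕ)
    (σ : ℕ → ℕ → Bool) : ∃ x, ∃ k ∈ A, K x < k ∧ ∀ i ≤ K x, σ (K x) i = c x k i := by
  obtain ⟨n, hn⟩ := hc A hA K
  obtain ⟨x, rfl, k, hkA, hk, hmatch⟩ := hn (σ n)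
  exact ⟨x, k, hkA, hk, hmatch⟩

/-- For a tortuous coloring `c` and any infinite `A ⊆ ℕ`, there is `α` such that for all
`n` and `σ : {0,…,n} → 2`, infinitely many `k ∈ A` satisfy `σ i = c α k i` for all `i ≤ n`. -/
theorem stmt7 {α : Type} (c : α → ℕ → ℕ → Bool) (hc : TortuousColoring c)
    (A : Set ℕ) (hA : A.Infinite) :
    ∃ x : α, ∀ (n : ℕ) (σ : ℕ → Bool),
      {k : ℕ | k ∈ A ∧ ∀ i ≤ n, σ i = c x k i}.Infinite := by
  by_contra! h
  choose n σ hfin using h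
  choose M hM using fun x => exists_forall_lt_exists_ne_of_finite (hfin x)
  obtain ⟨code, decode, hcode⟩ := exists_prefix_code
  obtain ⟨x, k, hkA, hk, hmatch⟩ := hc.exists_match hA (fun x => code (M x) (σ x)) decode
  obtain ⟨hMle, hdecode⟩ := hcode (M x) (σ x)
  obtain ⟨i, hi, hne⟩ := hM x k hkA (hMle.trans_lt hk)
  exact hne ((hdecode i hi).symm.trans (hmatch i (hi.trans hMle)))
end

section
/- 𝔰(pr) equals the least cardinal κ on which a tortuous coloring exists. -/
open Filter Set Cardinal

/- ### Auxiliary: encoding a finite binary string as the bits of a natural number -/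

def encBits (σ : ℕ → Bool) : ℕ → ℕ
  | 0 => (σ 0).toNat
  | n+1 => encBits σ n + (σ (n+1)).toNat * 2^(n+1)

lemma encBits_lt (σ : ℕ → Bool) : ∀ n, encBits σ n < 2^(n+1)
  | 0 => by cases h : σ 0 <;> simp [encBits, h]
  | n+1 => by
    have h1 := encBits_lt σ n
    have h2 : (σ (n+1)).toNat ≤ 1 := Bool.toNat_le _
    have : (σ (n+1)).toNat * 2^(n+1) ≤ 2^(n+1) := by nlinarith
    calc encBits σ (n+1) = encBits σ n + (σ (n+1)).toNat * 2^(n+1) := rfl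
      _ < 2^(n+1) + 2^(n+1) := by omega
      _ = 2^(n+2) := by ring

lemma testBit_encBits (σ : ℕ → Bool) : ∀ n, ∀ i ≤ n, (encBits σ n).testBit i = σ i
  | 0 => by
    intro i hi
    interval_cases i
    cases h : σ 0 <;> simp [encBits, h]
  | n+1 => by
    intro i hi
    rcases Nat.lt_or_ge i (n+1) with h | h
    · have key : encBits σ (n+1) = 2^i * ((σ (n+1)).toNat * 2^(n+1-i)) + encBits σ n := by
        show encBits σ n + (σ (n+1)).toNat * 2^(n+1) = _
        have : 2^(n+1) = 2^i * 2^(n+1-i) := by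
          rw [← pow_add]; congr 1; omega
        rw [this]; ring
      rw [key, Nat.testBit_mul_two_pow_add_eq]
      have he : (σ (n+1)).toNat * 2^(n+1-i) % 2 = 0 := by
        have : 2^(n+1-i) = 2 * 2^(n-i) := by
          rw [← pow_succ']; congr 1; omega
        rw [this, mul_left_comm]
        exact Nat.mul_mod_right 2 _
      rw [he]
      simp [testBit_encBits σ n i (by omega)]
    · have hi' : i = n+1 := by omega
      subst hi'
      show (encBits σ n + (σ (n+1)).toNat * 2^(n+1)).testBit (n+1) = σ (n+1)
      have key : encBits σ n + (σ (n+1)).toNat * 2^(n+1)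
          = 2^(n+1) * (σ (n+1)).toNat + encBits σ n := by ring
      rw [key, Nat.testBit_mul_two_pow_add_eq,
        Nat.testBit_eq_false_of_lt (encBits_lt σ n)]
      cases h : σ (n+1) <;> simp [h]

/- ### Auxiliary: the index of the piece containing `k` -/

lemma exists_piece {P : ℕ → Set ℕ} (hP : PartitionOfNat P) (k : ℕ) : ∃ j, k ∈ P j := by
  have : k ∈ ⋃ i, P i := by rw [hP.2]; trivial
  exact Set.mem_iUnion.mp this

noncomputable def pieceIdx {P : ℕ → Set ℕ} (hP : PartitionOfNat P) (k : ℕ) : ℕ :=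
  Classical.choose (exists_piece hP k)

lemma pieceIdx_spec {P : ℕ → Set ℕ} (hP : PartitionOfNat P) (k : ℕ) :
    k ∈ P (pieceIdx hP k) := Classical.choose_spec (exists_piece hP k)

lemma pieceIdx_eq {P : ℕ → Set ℕ} (hP : PartitionOfNat P) {k j : ℕ} (h : k ∈ P j) :
    pieceIdx hP k = j := by
  by_contra hne
  exact (hP.1 _ _ hne).ne_of_mem (pieceIdx_spec hP k) h rfl

/- ### Auxiliary: for every infinite `A` there is a partition splitting it -/

lemma exists_partition_splitting (A : Set ℕ) (hA : A.Infinite) :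
    ∃ P : ℕ → Set ℕ, PartitionOfNat P ∧ PartSplits P A := by
  classical
  haveI : Infinite ↥A := Set.infinite_coe_iff.mpr hA
  haveI : Denumerable ↥A := Nat.Subtype.denumerable A
  set e : ↥A ≃ ℕ := Denumerable.eqv ↥A with he
  set g : ℕ → ℕ := fun k => if h : k ∈ A then (Nat.unpair (e ⟨k, h⟩)).1 else 0 with hg
  refine ⟨fun j => g ⁻¹' {j}, ⟨?_, ?_⟩, ?_⟩
  · intro i j hij
    rw [Set.disjoint_left]
    rintro k (hk : g k = i) (hk' : g k = j)
    exact hij (hk ▸ hk')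
  · ext k
    simp only [Set.mem_iUnion, Set.mem_univ, iff_true]
    exact ⟨g k, rfl⟩
  · intro i
    apply Set.infinite_of_injective_forall_mem
      (f := fun jj : ℕ => (e.symm (Nat.pair i jj) : ℕ))
    · intro a b hab
      have h1 : e.symm (Nat.pair i a) = e.symm (Nat.pair i b) := Subtype.ext hab
      have h2 := e.symm.injective h1
      have h3 := congrArg (fun z => (Nat.unpair z).2) h2
      simpa using h3
    · intro jj
      have hmem : ((e.symm (Nat.pair i jj)) : ℕ) ∈ A := (e.symm (Nat.pair i jj)).2
      refine ⟨?_, hmem⟩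
      show g _ = i
      rw [hg]
      simp only [hmem, dif_pos]
      rw [Subtype.coe_eta, Equiv.apply_symm_apply, Nat.unpair_pair]

/- ### Direction 1: a splitting family of size κ yields a tortuous coloring on κ -/

lemma tortuous_of_splitting {F : Set (ℕ → Set ℕ)} (hF : ∀ P ∈ F, PartitionOfNat P)
    (hsplit : ∀ a : Set ℕ, a.Infinite → ∃ P ∈ F, PartSplits P a) :
    ∃ c : ↥F → ℕ → ℕ → Bool, TortuousColoring c := by
  refine ⟨fun x k i => (pieceIdx (hF x.1 x.2) k).testBit i, ?_⟩
  intro A hA K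
  obtain ⟨P, hPF, hPs⟩ := hsplit A hA
  refine ⟨K ⟨P, hPF⟩, fun σ => ⟨⟨P, hPF⟩, rfl, ?_⟩⟩
  set n := K ⟨P, hPF⟩
  obtain ⟨k, hk, hkn⟩ := (hPs (encBits σ n)).exists_gt n
  refine ⟨k, hk.2, hkn, fun i hi => ?_⟩
  show σ i = (pieceIdx (hF P hPF) k).testBit i
  rw [pieceIdx_eq (hF P hPF) hk.1, testBit_encBits σ n i hi]

/- ### Direction 2: a tortuous coloring on α yields a splitting family of size ≤ #α -/

lemma splitting_of_tortuous {α : Type} (c : α → ℕ → ℕ → Bool) (hc : TortuousColoring c) :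
    ∃ F : Set (ℕ → Set ℕ), #F ≤ #α ∧ (∀ P ∈ F, PartitionOfNat P) ∧
      ∀ a : Set ℕ, a.Infinite → ∃ P ∈ F, PartSplits P a := by
  classical
  set f : α → ℕ → ℕ := fun x k =>
    if h : ∃ i, c x k i = true then Nat.find h else 0 with hf
  set Q : α → ℕ → Set ℕ := fun x j => f x ⁻¹' {j} with hQ
  refine ⟨Set.range Q, mk_range_le, ?_, ?_⟩
  · rintro P ⟨x, rfl⟩
    constructor
    · intro i j hij
      rw [Set.disjoint_left]
      rintro k (hk : f x k = i) (hk' : f x k = j)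
      exact hij (hk ▸ hk')
    · ext k
      simp only [Set.mem_iUnion, Set.mem_univ, iff_true]
      exact ⟨f x k, rfl⟩
  · intro A hA
    by_contra hno
    push_neg at hno
    have hno' : ∀ x : α, ∃ j, (Q x j ∩ A).Finite := by
      intro x
      have := hno (Q x) ⟨x, rfl⟩
      simp only [PartSplits, not_forall] at this
      obtain ⟨j, hj⟩ := this
      exact ⟨j, Set.not_infinite.mp hj⟩
    choose m hm using hno'
    have hbd : ∀ x : α, ∃ N, ∀ k ∈ Q x (m x) ∩ A, k ≤ N := by
      intro x
      obtain ⟨N, hN⟩ := (hm x).bddAbove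
      exact ⟨N, fun k hk => hN hk⟩
    choose N hN using hbd
    obtain ⟨n, hn⟩ := hc A hA (fun x => Nat.pair (m x) (N x))
    obtain ⟨x, hKx, k, hkA, hkn, hmatch⟩ := hn (fun i => decide (i = (Nat.unpair n).1))
    have hun : (Nat.unpair n).1 = m x ∧ (Nat.unpair n).2 = N x := by
      rw [← hKx, Nat.unpair_pair]; exact ⟨rfl, rfl⟩
    have hmn : m x ≤ n := hKx ▸ Nat.left_le_pair (m x) (N x)
    have hNn : N x ≤ n := hKx ▸ Nat.right_le_pair (m x) (N x)
    have hcm : c x k (m x) = true := by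
      have := hmatch (m x) hmn
      rw [hun.1] at this
      simpa using this.symm
    have hlow : ∀ i < m x, ¬ (c x k i = true) := by
      intro i hilt hci
      have := hmatch i (le_trans (le_of_lt hilt) hmn)
      rw [hci] at this
      simp only [decide_eq_true_eq] at this
      omega
    have hfk : f x k = m x := by
      rw [hf]
      simp only
      rw [dif_pos ⟨m x, hcm⟩]
      exact (Nat.find_eq_iff _).mpr ⟨hcm, hlow⟩
    have : k ∈ Q x (m x) ∩ A := ⟨hfk, hkA⟩
    have := hN x k this
    omega

/- ### The main theorem -/

/-- `𝔰(pr)` is the least cardinal carrying a tortuous coloring. -/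
theorem stmt8 :
    sPR = sInf { κ : Cardinal |
      ∃ (α : Type) (c : α → ℕ → ℕ → Bool), #α = κ ∧ TortuousColoring c } := by
  set S1 := { κc : Cardinal | ∃ F : Set (ℕ → Set ℕ), #F = κc ∧ (∀ P ∈ F, PartitionOfNat P) ∧
    ∀ a : Set ℕ, a.Infinite → ∃ P ∈ F, PartSplits P a } with hS1
  set S2 := { κ : Cardinal |
      ∃ (α : Type) (c : α → ℕ → ℕ → Bool), #α = κ ∧ TortuousColoring c } with hS2
  have hsub : S1 ⊆ S2 := by
    rintro κ ⟨F, hFcard, hFpart, hFsplit⟩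
    obtain ⟨c, hc⟩ := tortuous_of_splitting hFpart hFsplit
    exact ⟨↥F, c, hFcard, hc⟩
  have hne : S1.Nonempty := by
    refine ⟨#{P : ℕ → Set ℕ | PartitionOfNat P}, _, rfl, fun P hP => hP, ?_⟩
    intro a ha
    obtain ⟨P, hP, hPs⟩ := exists_partition_splitting a ha
    exact ⟨P, hP, hPs⟩
  have hle : ∀ κ ∈ S2, sPR ≤ κ := by
    rintro κ ⟨α, c, hcard, hc⟩
    obtain ⟨F, hFle, hFpart, hFsplit⟩ := splitting_of_tortuous c hc
    calc sPR ≤ #F := csInf_le' ⟨F, rfl, hFpart, hFsplit⟩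
      _ ≤ #α := hFle
      _ = κ := hcard
  refine le_antisymm ?_ ?_
  · exact le_csInf (hne.mono hsub) (fun κ hκ => hle κ hκ)
  · exact csInf_le_csInf (OrderBot.bddBelow _) hne hsub
end

section
/- Let I be an interval partition and let A ⊆ ℕ be such that for each l ≥ 0 there exists N such that for all n ≥ N: (1) |A ∩ I_n| / |I_n| ≤ 2^{−l}, and (2) any two distinct i, j ∈ A ∩ I_n satisfy |i − j| > 2^{l−1}. Then A has asymptotic density zero. -/
open Filter Set Cardinal

/-- An interval partition is a strictly increasing `I : ℕ → ℕ` with `I 0 = 0`;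
the `n`-th interval is `[I n, I (n+1))`. -/
def IsIntervalPartition (I : ℕ → ℕ) : Prop := I 0 = 0 ∧ StrictMono I

/-!
Fix `l` and let `N` be the corresponding threshold at level `l + 1`. Below any `x ≥ I N`, the
complete intervals `I_n` with `n ≥ N` contribute at most `2^{-(l+1)} x` points of `A`, and the
last, incomplete interval contributes at most `x / 2^l + 1` points, because there consecutive
points of `A` are more than `2^l` apart. Hence `|A ∩ [0, x)| ≤ I N + 1 + 2^{1-l} x` for all
large `x`, and `l` is arbitrary.
-/

lemma StrictMono.exists_le_apply_lt_apply_succ {I : ℕ → ℕ} (hI : StrictMono I) {N x : ℕ}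
    (hx : I N ≤ x) : ∃ m, N ≤ m ∧ I m ≤ x ∧ x < I (m + 1) := by
  have hex : ∃ k, x < I k := ⟨x + 1, Nat.lt_of_lt_of_le x.lt_succ_self hI.le_apply⟩
  have hpos : Nat.find hex ≠ 0 := fun h0 =>
    (Nat.find_spec hex).not_ge (by rw [h0]; exact (hI.monotone N.zero_le).trans hx)
  refine ⟨Nat.find hex - 1, ?_, ?_, ?_⟩
  · have : N < Nat.find hex := hI.lt_iff_lt.1 (hx.trans_lt (Nat.find_spec hex))
    omega
  · exact not_lt.1 (Nat.find_min hex (by omega))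
  · simpa [Nat.sub_add_cancel (Nat.pos_of_ne_zero hpos)] using Nat.find_spec hex

lemma ncard_inter_Iio_le_add (A : Set ℕ) {x y : ℕ} (hxy : x ≤ y) :
    (A ∩ Iio y).ncard ≤ (A ∩ Iio x).ncard + (A ∩ Ico x y).ncard := by
  rw [← Iio_union_Ico_eq_Iio hxy, inter_union_distrib_left]
  exact ncard_union_le _ _

lemma ncard_le_div_add_one_of_sparse {S : Set ℕ} {a b d : ℕ} (hd : 0 < d) (hS : S ⊆ Ico a b)
    (hsparse : ∀ x ∈ S, ∀ y ∈ S, x < y → x + d ≤ y) :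
    S.ncard ≤ (b - a) / d + 1 := by
  have hmono : StrictMonoOn (fun x => (x - a) / d) S := by
    intro x hx y hy hxy
    have hax := (hS hx).1
    have hgap := hsparse x hx y hy hxy
    calc (x - a) / d < (x - a) / d + 1 := Nat.lt_succ_self _
      _ = (x - a + d) / d := (Nat.add_div_right _ hd).symm
      _ ≤ (y - a) / d := Nat.div_le_div_right (by omega)
  calc S.ncard ≤ (Iio ((b - a) / d + 1)).ncard :=
        ncard_le_ncard_of_injOn _ (fun x hx => Nat.lt_succ_of_le
          (Nat.div_le_div_right (Nat.sub_le_sub_right (hS hx).2.le a))) hmono.injOn (finite_Iio _)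
    _ = (b - a) / d + 1 := ncard_Iio_nat _

lemma add_lt_of_lt_abs_sub {i j d : ℕ} (hij : i < j) (h : (d : ℝ) < |(i : ℝ) - j|) :
    i + d < j := by
  rw [abs_sub_comm, abs_of_pos (sub_pos.2 (Nat.cast_lt.2 hij))] at h
  exact_mod_cast (by linarith : (i : ℝ) + d < j)

section IntervalPartition

variable {I : ℕ → ℕ} {A : Set ℕ} {N : ℕ} {δ : ℝ}

lemma ncard_inter_Iio_apply_le (hI : Monotone I)
    (hblock : ∀ n ≥ N, ((A ∩ Ico (I n) (I (n + 1))).ncard : ℝ) ≤ δ * (I (n + 1) - I n))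
    {m : ℕ} (hm : N ≤ m) :
    ((A ∩ Iio (I m)).ncard : ℝ) ≤ I N + δ * (I m - I N) := by
  induction m, hm using Nat.le_induction with
  | base =>
    have : (A ∩ Iio (I N)).ncard ≤ I N :=
      (ncard_le_ncard inter_subset_right (finite_Iio _)).trans (ncard_Iio_nat _).le
    simpa using (Nat.cast_le (α := ℝ)).2 this
  | succ m hm ih =>
    have hsplit : ((A ∩ Iio (I (m + 1))).ncard : ℝ)
        ≤ (A ∩ Iio (I m)).ncard + (A ∩ Ico (I m) (I (m + 1))).ncard := by
      exact_mod_cast ncard_inter_Iio_le_add A (hI m.le_succ)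
    linarith [hblock m hm]

lemma ncard_inter_Iio_le_of_sparse_blocks (hI : StrictMono I) (hδ : 0 ≤ δ) {d : ℕ} (hd : 0 < d)
    (hblock : ∀ n ≥ N, ((A ∩ Ico (I n) (I (n + 1))).ncard : ℝ) ≤ δ * (I (n + 1) - I n))
    (hsparse : ∀ n ≥ N, ∀ i ∈ A ∩ Ico (I n) (I (n + 1)), ∀ j ∈ A ∩ Ico (I n) (I (n + 1)),
      i < j → i + d ≤ j)
    {x : ℕ} (hx : I N ≤ x) :
    ((A ∩ Iio x).ncard : ℝ) ≤ I N + 1 + (δ + 1 / d) * x := by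
  obtain ⟨m, hNm, hmx, hxm⟩ := hI.exists_le_apply_lt_apply_succ hx
  have hsplit : ((A ∩ Iio x).ncard : ℝ) ≤ (A ∩ Iio (I m)).ncard + (A ∩ Ico (I m) x).ncard := by
    exact_mod_cast ncard_inter_Iio_le_add A hmx
  have hfull := ncard_inter_Iio_apply_le hI.monotone hblock hNm
  have hsub : A ∩ Ico (I m) x ⊆ A ∩ Ico (I m) (I (m + 1)) :=
    inter_subset_inter_right _ (Ico_subset_Ico_right hxm.le)
  have hpart : ((A ∩ Ico (I m) x).ncard : ℝ) ≤ x / d + 1 := by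
    have hcard := ncard_le_div_add_one_of_sparse hd inter_subset_right
      fun i hi j hj => hsparse m hNm i (hsub hi) j (hsub hj)
    calc ((A ∩ Ico (I m) x).ncard : ℝ) ≤ (((x - I m) / d : ℕ) : ℝ) + 1 := by exact_mod_cast hcard
      _ ≤ ((x - I m : ℕ) : ℝ) / d + 1 := by gcongr; exact Nat.cast_div_le
      _ ≤ x / d + 1 := by gcongr; exact_mod_cast Nat.sub_le x (I m)
  have hδx : δ * (I m - I N) ≤ δ * x :=
    mul_le_mul_of_nonneg_left (by linarith [(Nat.cast_le (α := ℝ)).2 hmx, Nat.cast_nonneg (α := ℝ) (I N)]) hδ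
  have : (x : ℝ) / d = 1 / d * x := by ring
  linarith

end IntervalPartition

lemma densityZero_of_forall_ncard_le {A : Set ℕ}
    (h : ∀ ε > 0, ∃ C : ℝ, ∀ᶠ n in atTop, ((A ∩ Iio n).ncard : ℝ) ≤ C + ε * n) :
    DensityZero A := by
  refine tendsto_order.2 ⟨fun a ha => Eventually.of_forall fun n => ha.trans_le (by positivity),
    fun ε hε => ?_⟩
  obtain ⟨C, hC⟩ := h (ε / 2) (half_pos hε)
  have hCn : ∀ᶠ n : ℕ in atTop, C / n < ε / 2 :=
    (tendsto_const_div_atTop_nhds_zero_nat C).eventually (gt_mem_nhds (half_pos hε))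
  filter_upwards [hC, hCn, eventually_gt_atTop 0] with n hn hCn hpos
  have hn0 : (0 : ℝ) < n := Nat.cast_pos.2 hpos
  rw [div_lt_iff₀ hn0] at hCn ⊢
  linarith

/-- Lemma 12 of the paper: if for each `l` there is `N` such that for all `n ≥ N` the set
`A` meets the interval `I_n` in at most a `2^{-l}` fraction, and any two distinct elements
of `A ∩ I_n` are more than `2^{l-1}` apart, then `A` has density zero. -/
theorem stmt10 (I : ℕ → ℕ) (hI : IsIntervalPartition I) (A : Set ℕ)
    (h : ∀ l : ℕ, ∃ N : ℕ, ∀ n ≥ N,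
      (((A ∩ Set.Ico (I n) (I (n + 1))).ncard : ℝ) / ((I (n + 1) - I n : ℕ) : ℝ)
          ≤ 1 / 2 ^ l) ∧
      (∀ i ∈ A ∩ Set.Ico (I n) (I (n + 1)), ∀ j ∈ A ∩ Set.Ico (I n) (I (n + 1)),
        i ≠ j → (2 : ℝ) ^ ((l : ℤ) - 1) < |(i : ℝ) - (j : ℝ)|)) :
    DensityZero A := by
  obtain ⟨-, hI⟩ := hI
  refine densityZero_of_forall_ncard_le fun ε hε => ?_
  obtain ⟨l, hl⟩ : ∃ l : ℕ, (1 / 2 : ℝ) ^ l < ε / 2 :=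
    exists_pow_lt_of_lt_one (half_pos hε) (by norm_num)
  obtain ⟨N, hN⟩ := h (l + 1)
  have hblock : ∀ n ≥ N,
      ((A ∩ Ico (I n) (I (n + 1))).ncard : ℝ) ≤ 1 / 2 ^ (l + 1) * (I (n + 1) - I n) := by
    intro n hn
    have hlen := hI n.lt_succ_self
    have := (div_le_iff₀ (by exact_mod_cast Nat.sub_pos_of_lt hlen)).1 (hN n hn).1
    rwa [Nat.cast_sub hlen.le] at this
  have hsparse : ∀ n ≥ N, ∀ i ∈ A ∩ Ico (I n) (I (n + 1)), ∀ j ∈ A ∩ Ico (I n) (I (n + 1)),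
      i < j → i + 2 ^ l ≤ j := fun n hn i hi j hj hij =>
    (add_lt_of_lt_abs_sub hij (by simpa using (hN n hn).2 i hi j hj hij.ne)).le
  refine ⟨I N + 1, eventually_atTop.2 ⟨I N, fun x hx =>
    (ncard_inter_Iio_le_of_sparse_blocks hI (by positivity) (by positivity) hblock hsparse hx).trans
      ?_⟩⟩
  have hδ : 1 / 2 ^ (l + 1) + 1 / ((2 ^ l : ℕ) : ℝ) ≤ ε := by
    have : (1 : ℝ) / 2 ^ (l + 1) ≤ 1 / 2 ^ l := by gcongr <;> norm_num
    rw [one_div_pow] at hl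
    push_cast
    linarith
  gcongr
end

section
/- Let l > 0 be a natural number and let X ⊆ ℕ with |X| = 2^l. Then there exists a sequence ⟨A_σ : σ ∈ 2^{≤l}⟩ of subsets of X such that: (1) for each m ≤ l, the sets A_σ for σ ∈ 2^m are pairwise disjoint and their union is X; (2) |A_σ| = 2^{l − |σ|} for each σ ∈ 2^{≤l}, and σ ⊆ τ implies A_τ ⊆ A_σ; (3) for each σ ∈ 2^{≤l}, any two distinct i, j ∈ A_σ satisfy |i − j| > 2^{|σ|−1}. -/
/-!
Enumerate `X` increasingly as `e 0 < e 1 < ⋯ < e (2^l - 1)` and read a binary string `σ` as a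
number `⟦σ⟧ < 2^|σ|`, first bit least significant. Take `A σ = {e k | k ≡ ⟦σ⟧ mod 2^|σ|}`.
Extending `σ` refines the residue class, the classes mod `2^m` partition the indices into pieces
of size `2^(l-m)`, and two distinct indices in one class differ by at least `2^|σ|`. As `e` is
strictly increasing on naturals, `e b - e a ≥ b - a`, so the images are at least `2^|σ|` apart.
-/

open Set

theorem lt_two_of_mem_map_toNat {σ : List Bool} : ∀ x ∈ σ.map Bool.toNat, x < 2 := by
  simp only [List.mem_map]
  rintro _ ⟨b, -, rfl⟩
  exact b.toNat_lt

def binaryValue (σ : List Bool) : ℕ := Nat.ofDigits 2 (σ.map Bool.toNat)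

theorem binaryValue_cons (b : Bool) (σ : List Bool) :
    binaryValue (b :: σ) = b.toNat + 2 * binaryValue σ := rfl

theorem binaryValue_lt (σ : List Bool) : binaryValue σ < 2 ^ σ.length := by
  rw [binaryValue, ← List.length_map (f := Bool.toNat)]
  exact Nat.ofDigits_lt_base_pow_length one_lt_two lt_two_of_mem_map_toNat

theorem binaryValue_append (σ ρ : List Bool) :
    binaryValue (σ ++ ρ) = binaryValue σ + 2 ^ σ.length * binaryValue ρ := by
  simp [binaryValue, Nat.ofDigits_append]

theorem eq_of_length_eq_of_binaryValue_eq {σ τ : List Bool} (hlen : σ.length = τ.length)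
    (h : binaryValue σ = binaryValue τ) : σ = τ := by
  refine List.map_injective_iff.2 (fun a b hab => ?_) <|
    Nat.ofDigits_inj_of_len_eq one_lt_two (by simpa using hlen) lt_two_of_mem_map_toNat
      lt_two_of_mem_map_toNat h
  cases a <;> cases b <;> simp_all

theorem exists_length_eq_binaryValue_eq {m n : ℕ} (hn : n < 2 ^ m) :
    ∃ σ : List Bool, σ.length = m ∧ binaryValue σ = n := by
  induction m generalizing n with
  | zero => exact ⟨[], rfl, by simp_all [binaryValue]⟩
  | succ m ih =>
    obtain ⟨σ, hσ, hval⟩ := ih (n := n / 2) (by rw [pow_succ] at hn; omega)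
    refine ⟨decide (n % 2 = 1) :: σ, by simp [hσ], ?_⟩
    rw [binaryValue_cons, hval]
    rcases Nat.mod_two_eq_zero_or_one n with h | h <;> simp [h] <;> omega

theorem binaryValue_append_mod (σ ρ : List Bool) :
    binaryValue (σ ++ ρ) % 2 ^ σ.length = binaryValue σ := by
  rw [binaryValue_append, Nat.add_mul_mod_self_left, Nat.mod_eq_of_lt (binaryValue_lt σ)]

theorem card_filter_range_mul_mod_eq {M C v : ℕ} (hv : v < M) :
    Finset.card {k ∈ Finset.range (M * C) | k % M = v} = C := by
  have hM : (0 : ℚ) < M := by exact_mod_cast (show 0 < M by omega)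
  have h := Nat.count_modEq_card_eq_ceil (M * C) (show 0 < M by omega) v
  rw [Nat.count_eq_card_filter_range, Nat.mod_eq_of_lt hv] at h
  simp only [Nat.ModEq, Nat.mod_eq_of_lt hv] at h
  rw [← Int.natCast_inj, h, Int.ceil_eq_iff]
  push_cast
  constructor
  · rw [lt_div_iff₀ hM]; have : (v : ℚ) < M := by exact_mod_cast hv
    nlinarith
  · rw [div_le_iff₀ hM]; have : (0 : ℚ) ≤ v := by positivity
    nlinarith

theorem StrictMonoOn.add_le_nat {f : ℕ → ℕ} {N : ℕ} (hf : StrictMonoOn f (Iio N)) {m n : ℕ}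
    (h : m + n < N) : m + f n ≤ f (m + n) := by
  induction m with
  | zero => simp
  | succ m ih =>
    have := hf (show m + n < N by omega) h (by omega)
    have := ih (by omega)
    omega

theorem Set.Finite.exists_strictMonoOn_image_Iio_ncard {X : Set ℕ} (hX : X.Finite) :
    ∃ e : ℕ → ℕ, StrictMonoOn e (Iio X.ncard) ∧ e '' Iio X.ncard = X := by
  rw [Set.ncard_eq_toFinset_card X hX]
  exact ⟨Nat.nth (· ∈ X), Nat.nth_strictMonoOn hX, Nat.image_nth_Iio_card hX⟩

def binaryBlock (e : ℕ → ℕ) (N : ℕ) (σ : List Bool) : Set ℕ :=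
  e '' {k | k < N ∧ k % 2 ^ σ.length = binaryValue σ}

section binaryBlock

variable {e : ℕ → ℕ} {N : ℕ}

theorem binaryBlock_subset_image (σ : List Bool) : binaryBlock e N σ ⊆ e '' Iio N :=
  image_mono fun _ hk => hk.1

theorem biUnion_binaryBlock (m : ℕ) :
    ⋃ σ ∈ {s : List Bool | s.length = m}, binaryBlock e N σ = e '' Iio N := by
  refine subset_antisymm (iUnion₂_subset fun σ _ => binaryBlock_subset_image σ) ?_
  rintro _ ⟨k, hk, rfl⟩
  obtain ⟨σ, hσ, hval⟩ := exists_length_eq_binaryValue_eq (Nat.mod_lt k (pow_pos two_pos m))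
  exact mem_biUnion hσ ⟨k, ⟨hk, by rw [hσ, hval]⟩, rfl⟩

theorem disjoint_binaryBlock (he : InjOn e (Iio N)) {σ τ : List Bool}
    (hlen : σ.length = τ.length) (hne : σ ≠ τ) :
    Disjoint (binaryBlock e N σ) (binaryBlock e N τ) := by
  refine Set.disjoint_left.2 ?_
  rintro _ ⟨k, ⟨hk, hkσ⟩, rfl⟩ ⟨k', ⟨hk', hkτ⟩, hkk'⟩
  obtain rfl := he hk' hk hkk'
  exact hne (eq_of_length_eq_of_binaryValue_eq hlen (by rw [← hkσ, ← hkτ, hlen]))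

theorem ncard_binaryBlock (he : InjOn e (Iio N)) {σ : List Bool} {C : ℕ}
    (hN : N = 2 ^ σ.length * C) : (binaryBlock e N σ).ncard = C := by
  rw [binaryBlock, (he.mono fun _ hk => hk.1).ncard_image, ← card_filter_range_mul_mod_eq (C := C)
    (binaryValue_lt σ), ← hN, ← Set.ncard_coe_finset]
  congr 1
  ext k
  simp

theorem binaryBlock_subset_of_prefix {σ τ : List Bool} (h : σ <+: τ) :
    binaryBlock e N τ ⊆ binaryBlock e N σ := by
  obtain ⟨ρ, rfl⟩ := h
  refine image_mono fun k ⟨hk, hkτ⟩ => ⟨hk, ?_⟩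
  rw [← binaryValue_append_mod σ ρ, ← hkτ, Nat.mod_mod_of_dvd]
  exact pow_dvd_pow 2 (by simp)

theorem add_two_pow_le_of_mem_binaryBlock (he : StrictMonoOn e (Iio N)) {σ : List Bool}
    {i j : ℕ} (hi : i ∈ binaryBlock e N σ) (hj : j ∈ binaryBlock e N σ) (hij : i < j) :
    i + 2 ^ σ.length ≤ j := by
  obtain ⟨a, ⟨ha, haσ⟩, rfl⟩ := hi
  obtain ⟨b, ⟨hb, hbσ⟩, rfl⟩ := hj
  have hab : a < b := he.lt_iff_lt ha hb |>.1 hij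
  have hdvd : 2 ^ σ.length ∣ b - a := (Nat.modEq_iff_dvd' hab.le).1 (haσ.trans hbσ.symm)
  have hgap : 2 ^ σ.length ≤ b - a := Nat.le_of_dvd (by omega) hdvd
  have := he.add_le_nat (m := b - a) (n := a) (by omega)
  rw [Nat.sub_add_cancel hab.le] at this
  omega

theorem two_pow_le_abs_sub_of_mem_binaryBlock (he : StrictMonoOn e (Iio N)) {σ : List Bool}
    {i j : ℕ} (hi : i ∈ binaryBlock e N σ) (hj : j ∈ binaryBlock e N σ) (hij : i ≠ j) :
    (2 : ℝ) ^ σ.length ≤ |(i : ℝ) - j| := by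
  wlog h : i < j generalizing i j
  · rw [abs_sub_comm]
    exact this hj hi hij.symm (hij.symm.lt_of_le (not_lt.1 h))
  have hgap : (i : ℝ) + 2 ^ σ.length ≤ j := by
    exact_mod_cast add_two_pow_le_of_mem_binaryBlock he hi hj h
  exact (by linarith : (2 : ℝ) ^ σ.length ≤ -(i - j)).trans (neg_le_abs _)

end binaryBlock

theorem stmt11_general (l : ℕ) (X : Set ℕ) (hX : X.ncard = 2 ^ l) :
    ∃ A : List Bool → Set ℕ,
      (∀ σ : List Bool, σ.length ≤ l → A σ ⊆ X) ∧
      (∀ m ≤ l,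
        (⋃ σ ∈ {s : List Bool | s.length = m}, A σ) = X ∧
        (∀ σ τ : List Bool, σ.length = m → τ.length = m → σ ≠ τ →
          Disjoint (A σ) (A τ))) ∧
      (∀ σ : List Bool, σ.length ≤ l → (A σ).ncard = 2 ^ (l - σ.length)) ∧
      (∀ σ τ : List Bool, τ.length ≤ l → σ <+: τ → A τ ⊆ A σ) ∧
      (∀ σ : List Bool, σ.length ≤ l → ∀ i ∈ A σ, ∀ j ∈ A σ, i ≠ j →
        (2 : ℝ) ^ ((σ.length : ℤ) - 1) < |(i : ℝ) - (j : ℝ)|) := by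
  obtain ⟨e, hmono, himage⟩ :=
    (Set.finite_of_ncard_pos (by rw [hX]; positivity)).exists_strictMonoOn_image_Iio_ncard
  rw [hX] at hmono himage
  refine ⟨binaryBlock e (2 ^ l), fun σ _ => himage ▸ binaryBlock_subset_image σ,
    fun m _ => ⟨himage ▸ biUnion_binaryBlock m, fun σ τ hσ hτ =>
      disjoint_binaryBlock hmono.injOn (hσ.trans hτ.symm)⟩,
    fun σ hσ => ncard_binaryBlock hmono.injOn (by rw [← pow_add, Nat.add_sub_cancel' hσ]),
    fun σ τ _ => binaryBlock_subset_of_prefix, fun σ _ i hi j hj hij => ?_⟩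
  calc (2 : ℝ) ^ ((σ.length : ℤ) - 1) < (2 : ℝ) ^ (σ.length : ℤ) :=
        zpow_lt_zpow_right₀ one_lt_two (by omega)
    _ ≤ |(i : ℝ) - j| := by
        rw [zpow_natCast]; exact two_pow_le_abs_sub_of_mem_binaryBlock hmono hi hj hij

/-- Lemma 13 of the paper: a binary tree decomposition of a set `X` of size `2^l`,
indexed by binary strings (`List Bool`) of length at most `l`. -/
theorem stmt11 (l : ℕ) (hl : 0 < l) (X : Set ℕ) (hX : X.ncard = 2 ^ l) :
    ∃ A : List Bool → Set ℕ,
      (∀ σ : List Bool, σ.length ≤ l → A σ ⊆ X) ∧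
      (∀ m ≤ l,
        (⋃ σ ∈ {s : List Bool | s.length = m}, A σ) = X ∧
        (∀ σ τ : List Bool, σ.length = m → τ.length = m → σ ≠ τ →
          Disjoint (A σ) (A τ))) ∧
      (∀ σ : List Bool, σ.length ≤ l → (A σ).ncard = 2 ^ (l - σ.length)) ∧
      (∀ σ τ : List Bool, τ.length ≤ l → σ <+: τ → A τ ⊆ A σ) ∧
      (∀ σ : List Bool, σ.length ≤ l → ∀ i ∈ A σ, ∀ j ∈ A σ, i ≠ j →
        (2 : ℝ) ^ ((σ.length : ℤ) - 1) < |(i : ℝ) - (j : ℝ)|) :=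
  stmt11_general l X hX
end

section
/- There exists a family B of interval partitions such that: (1) |B| ≤ 𝔟; (2) for each I ∈ B and each n, there is l_n with l_n > 0, l_n ≥ n, and |I_n| = 2^{l_n}; (3) for every interval partition J there exists I ∈ B such that for infinitely many n there is k > n with J_k ⊆ I_n. -/
open Filter Set Cardinal

/-- The bounding number `𝔟`. -/
noncomputable def frakB : Cardinal :=
  sInf { κc : Cardinal | ∃ F : Set (ℕ → ℕ), #F = κc ∧
    ∀ g : ℕ → ℕ, ∃ f ∈ F, ¬ (∀ᶠ n in atTop, f n ≤ g n) }

/-!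
Fix an unbounded family `F` of size `𝔟` and let `I^f` be the partition whose `n`-th interval
has length `2 ^ max (n + 1) (max_{m < I^f n} f m)`. Given `J`, pick `f ∈ F` with `g m < f m`
for infinitely many `m`, where `g m = J (J (m + 2) + 2)`. For such an `m ∈ I^f_n`, one of
`n' = n, n + 1` satisfies `J (I^f n' + 2) ≤ I^f (n' + 1)`: otherwise
`I^f (n + 2) < J (I^f (n + 1) + 2) ≤ g m < f m`, while the `(n+1)`-st interval alone is longer
than `f m`. As `n' ≤ I^f n'`, that inequality traps some `J_k` with `k > n'` inside `I^f_{n'}`.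
-/

theorem exists_unbounded_family_card_eq_frakB :
    ∃ F : Set (ℕ → ℕ), #F = frakB ∧ ∀ g : ℕ → ℕ, ∃ f ∈ F, ∃ᶠ n in atTop, g n < f n := by
  have hne : { κc : Cardinal | ∃ F : Set (ℕ → ℕ), #F = κc ∧
      ∀ g : ℕ → ℕ, ∃ f ∈ F, ¬ (∀ᶠ n in atTop, f n ≤ g n) }.Nonempty := by
    refine ⟨_, univ, rfl, fun g => ⟨g + 1, mem_univ _, fun h => ?_⟩⟩
    obtain ⟨n, hn⟩ := h.exists
    simp at hn
  obtain ⟨F, hcard, hunb⟩ := csInf_mem hne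
  refine ⟨F, hcard, fun g => ?_⟩
  obtain ⟨f, hf, hfg⟩ := hunb g
  exact ⟨f, hf, by simpa only [not_eventually, not_le] using hfg⟩

theorem IsIntervalPartition.exists_le_lt_succ {I : ℕ → ℕ} (hI : IsIntervalPartition I)
    (m : ℕ) : ∃ n, I n ≤ m ∧ m < I (n + 1) := by
  induction m with
  | zero => exact ⟨0, hI.1.le, hI.1.symm.trans_lt (hI.2 Nat.zero_lt_one)⟩
  | succ m ih =>
    obtain ⟨n, hle, hlt⟩ := ih
    rcases (Nat.succ_le_of_lt hlt).lt_or_eq with h | h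
    · exact ⟨n, by omega, h⟩
    · exact ⟨n + 1, h.ge, h.trans_lt (hI.2 (Nat.lt_succ_self _))⟩

theorem StrictMono.exists_Ico_subset_Ico {J : ℕ → ℕ} (hJ : StrictMono J) {n a b : ℕ}
    (hna : n ≤ a) (hb : J (a + 2) ≤ b) :
    ∃ k > n, Ico (J k) (J (k + 1)) ⊆ Ico a b := by
  classical
  have hex : ∃ k, a ≤ J k := ⟨a, hJ.le_apply⟩
  have hfind : Nat.find hex ≤ a := Nat.find_min' hex hJ.le_apply
  refine ⟨max (Nat.find hex) (n + 1), by omega, Ico_subset_Ico ?_ ?_⟩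
  · exact (Nat.find_spec hex).trans (hJ.monotone (le_max_left _ _))
  · exact (hJ.monotone (by omega)).trans hb

def blockPartition (f : ℕ → ℕ) : ℕ → ℕ
  | 0 => 0
  | n + 1 => blockPartition f n + 2 ^ max (n + 1) ((Finset.range (blockPartition f n)).sup f)

theorem blockPartition_succ_sub (f : ℕ → ℕ) (n : ℕ) :
    blockPartition f (n + 1) - blockPartition f n =
      2 ^ max (n + 1) ((Finset.range (blockPartition f n)).sup f) := by
  simp only [blockPartition, Nat.add_sub_cancel_left]

theorem isIntervalPartition_blockPartition (f : ℕ → ℕ) :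
    IsIntervalPartition (blockPartition f) :=
  ⟨rfl, strictMono_nat_of_lt_succ fun n => by
    simp only [blockPartition]
    exact Nat.lt_add_of_pos_right (Nat.two_pow_pos _)⟩

theorem lt_blockPartition_of_lt {f : ℕ → ℕ} {m n : ℕ} (hm : m < blockPartition f (n + 1)) :
    f m < blockPartition f (n + 2) :=
  calc f m ≤ (Finset.range (blockPartition f (n + 1))).sup f :=
        Finset.le_sup (Finset.mem_range.2 hm)
    _ < 2 ^ max (n + 2) ((Finset.range (blockPartition f (n + 1))).sup f) :=
        (le_max_right _ _).trans_lt Nat.lt_two_pow_self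
    _ ≤ blockPartition f (n + 2) := Nat.le_add_left _ _

theorem frequently_apply_blockPartition_add_two_le {f J : ℕ → ℕ} (hJ : Monotone J)
    (hfJ : ∃ᶠ m in atTop, J (J (m + 2) + 2) < f m) :
    ∃ᶠ n in atTop, J (blockPartition f n + 2) ≤ blockPartition f (n + 1) := by
  have hI := isIntervalPartition_blockPartition f
  set I := blockPartition f
  rw [frequently_atTop] at hfJ ⊢
  intro N
  obtain ⟨m, hNm, hm⟩ := hfJ (I N)
  obtain ⟨n, hnm, hmn⟩ := hI.exists_le_lt_succ m
  have hNn : N ≤ n := Nat.lt_succ_iff.1 (hI.2.lt_iff_lt.1 (hNm.trans_lt hmn))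
  by_contra! hfail
  have hn : I (n + 1) < J (I n + 2) := hfail n hNn
  have hn' : I (n + 2) < J (I (n + 1) + 2) := hfail (n + 1) (by omega)
  have hJm : I (n + 1) ≤ J (m + 2) := hn.le.trans (hJ (by omega))
  exact lt_irrefl (f m) <| calc
    f m < I (n + 2) := lt_blockPartition_of_lt hmn
    _ < J (I (n + 1) + 2) := hn'
    _ ≤ J (J (m + 2) + 2) := hJ (Nat.add_le_add_right hJm 2)
    _ < f m := hm

/-- Lemma: there is a family `B` of at most `𝔟` many interval partitions, each of whose
intervals has size an exact power `2^{l_n}` with `l_n > 0`, `l_n ≥ n`, such that every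
interval partition `J` has infinitely many of its intervals absorbed (with index shift)
by some member of `B`. -/
theorem stmt12 :
    ∃ B : Set (ℕ → ℕ),
      (∀ I ∈ B, IsIntervalPartition I) ∧
      #B ≤ frakB ∧
      (∀ I ∈ B, ∀ n : ℕ, ∃ l : ℕ, 0 < l ∧ n ≤ l ∧ I (n + 1) - I n = 2 ^ l) ∧
      (∀ J : ℕ → ℕ, IsIntervalPartition J → ∃ I ∈ B,
        {n : ℕ | ∃ k > n, Set.Ico (J k) (J (k + 1)) ⊆ Set.Ico (I n) (I (n + 1))}.Infinite) := by
  obtain ⟨F, hcard, hunb⟩ := exists_unbounded_family_card_eq_frakB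
  refine ⟨blockPartition '' F, ?_, mk_image_le.trans hcard.le, ?_, fun J hJ => ?_⟩
  · rintro _ ⟨f, -, rfl⟩
    exact isIntervalPartition_blockPartition f
  · rintro _ ⟨f, -, rfl⟩ n
    exact ⟨_, by omega, by omega, blockPartition_succ_sub f n⟩
  · obtain ⟨f, hf, hfJ⟩ := hunb fun m => J (J (m + 2) + 2)
    refine ⟨blockPartition f, mem_image_of_mem _ hf, ?_⟩
    rw [← Nat.frequently_atTop_iff_infinite]
    exact (frequently_apply_blockPartition_add_two_le hJ.2.monotone hfJ).mono fun n hn =>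
      hJ.2.exists_Ico_subset_Ico (isIntervalPartition_blockPartition f).2.le_apply hn
end

section
/- Let J be an interval partition such that for each n, |J_n| = 2^{l_n} with l_n > 0 and l_n ≥ n, let Ā be a tree system for J, let f ∈ F_{J,Ā}, and let I be any interval partition. Then the set Z_{I,J,f} has asymptotic density zero. -/
open Filter Set Cardinal

/-- A tree system `Ā = ⟨A_{n,σ}⟩` for an interval partition `J` whose `n`-th interval has
size `2^{l n}`: for each `n`, the sets `A_{n,σ}` for `σ` of length `m ≤ l n` partition
`J_n`, have sizes `2^{l n - |σ|}`, are decreasing along extensions of `σ`, and distinct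
elements of `A_{n,σ}` are more than `2^{|σ| - 1}` apart. -/
def TreeSystem (J : ℕ → ℕ) (l : ℕ → ℕ) (A : ℕ → List Bool → Set ℕ) : Prop :=
  ∀ n : ℕ,
    (∀ m ≤ l n,
      (⋃ σ ∈ {s : List Bool | s.length = m}, A n σ) = Set.Ico (J n) (J (n + 1)) ∧
      (∀ σ τ : List Bool, σ.length = m → τ.length = m → σ ≠ τ →
        Disjoint (A n σ) (A n τ))) ∧
    (∀ σ : List Bool, σ.length ≤ l n → (A n σ).ncard = 2 ^ (l n - σ.length)) ∧
    (∀ σ τ : List Bool, τ.length ≤ l n → σ <+: τ → A n τ ⊆ A n σ) ∧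
    (∀ σ : List Bool, σ.length ≤ l n → ∀ i ∈ A n σ, ∀ j ∈ A n σ, i ≠ j →
      (2 : ℝ) ^ ((σ.length : ℤ) - 1) < |(i : ℝ) - (j : ℝ)|)

/-- `f ∈ F_{J,Ā}`: for each `n` and each `m < l n` the fiber `f⁻¹({m}) ∩ J_n` is one of
the sets `A_{n,σ}` with `|σ| = m + 1`, and the fiber `f⁻¹({l n}) ∩ J_n` is some `A_{n,τ}`
with `|τ| = l n`. -/
def MemFJA (J : ℕ → ℕ) (l : ℕ → ℕ) (A : ℕ → List Bool → Set ℕ) (f : ℕ → ℕ) : Prop :=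
  ∀ n : ℕ,
    (∀ m < l n, ∃ σ : List Bool, σ.length = m + 1 ∧
      f ⁻¹' {m} ∩ Set.Ico (J n) (J (n + 1)) = A n σ) ∧
    (∃ τ : List Bool, τ.length = l n ∧
      f ⁻¹' {l n} ∩ Set.Ico (J n) (J (n + 1)) = A n τ)

/-- `Z_{I,J,f} = ⋃_l Z_{I,J,f,l}` where
`Z_{I,J,f,l} = {m : ∃ k ∈ I_l, m ∈ J_k ∧ f m ≥ l}`. -/
def ZSet (I J : ℕ → ℕ) (f : ℕ → ℕ) : Set ℕ :=
  ⋃ l : ℕ, {m : ℕ | ∃ k ∈ Set.Ico (I l) (I (l + 1)),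
    m ∈ Set.Ico (J k) (J (k + 1)) ∧ l ≤ f m}

/-!
Fix a block `J_k` with `k ∈ I_t`. Every point of `Z` in `J_k` has `f ≥ t`, and `{f ≥ t} ∩ J_k`
is a single node `A_{k,ρ}` of depth `t` of the tree: each level set `{f = s}` is one child of the
current node, so `{f > s}` lies in its sibling. Hence `Z` fills at most a `2^{-t}` fraction of a
whole block, and inside a block its points are more than `2^{t-1}` apart, which also controls a
block cut off at `n`. As `t → ∞` along the blocks, `Z` has density zero.
-/

lemma ncard_le_div_add_one_of_le_sub {S : Set ℕ} {a b D : ℕ} (hD : 0 < D)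
    (hS : S ⊆ Ico a b) (hsep : ∀ i ∈ S, ∀ j ∈ S, i < j → D ≤ j - i) :
    S.ncard ≤ (b - a) / D + 1 := by
  have hmono : StrictMonoOn (fun x => (x - a) / D) S := by
    intro x hx y hy hxy
    show (x - a) / D < (y - a) / D
    have hgap := hsep x hx y hy hxy
    have hax := (hS hx).1
    rw [← Nat.add_one_le_iff, Nat.le_div_iff_mul_le hD, add_one_mul]
    have := Nat.div_mul_le_self (x - a) D
    omega
  calc S.ncard ≤ (Iio ((b - a) / D + 1)).ncard := by
        refine ncard_le_ncard_of_injOn _ (fun x hx => ?_) hmono.injOn (finite_Iio _)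
        have := (hS hx).2
        simp only [mem_Iio, Nat.lt_add_one_iff]
        exact Nat.div_le_div_right (by omega)
    _ = (b - a) / D + 1 := ncard_Iio_nat _

lemma ncard_inter_Iio_le_add_s13 (Z : Set ℕ) {a b : ℕ} (h : a ≤ b) :
    (Z ∩ Iio b).ncard ≤ (Z ∩ Iio a).ncard + (Z ∩ Ico a b).ncard := by
  rw [← Iio_union_Ico_eq_Iio h, inter_union_distrib_left]
  exact ncard_union_le _ _

def intervalIndex (I : ℕ → ℕ) (k : ℕ) : ℕ := Nat.findGreatest (fun j => I j ≤ k) k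

lemma intervalIndex_le (I : ℕ → ℕ) (k : ℕ) : intervalIndex I k ≤ k := Nat.findGreatest_le k

namespace IsIntervalPartition

variable {I : ℕ → ℕ}

lemma mem_Ico_intervalIndex (hI : IsIntervalPartition I) (k : ℕ) :
    k ∈ Ico (I (intervalIndex I k)) (I (intervalIndex I k + 1)) := by
  refine ⟨Nat.findGreatest_spec (P := fun j => I j ≤ k) k.zero_le (by simp [hI.1]), ?_⟩
  by_contra! h
  have := Nat.le_findGreatest (P := fun j => I j ≤ k) (hI.2.le_apply.trans h) h
  exact (intervalIndex I k).lt_add_one.not_ge this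

lemma eq_of_mem_Ico (hI : IsIntervalPartition I) {j j' k : ℕ} (h : k ∈ Ico (I j) (I (j + 1)))
    (h' : k ∈ Ico (I j') (I (j' + 1))) : j = j' := by
  have := hI.2.lt_iff_lt.1 (h.1.trans_lt h'.2)
  have := hI.2.lt_iff_lt.1 (h'.1.trans_lt h.2)
  omega

lemma intervalIndex_eq (hI : IsIntervalPartition I) {j k : ℕ}
    (h : k ∈ Ico (I j) (I (j + 1))) : intervalIndex I k = j :=
  hI.eq_of_mem_Ico (hI.mem_Ico_intervalIndex k) h

lemma le_intervalIndex (hI : IsIntervalPartition I) {j k : ℕ} (h : I j ≤ k) :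
    j ≤ intervalIndex I k :=
  Nat.lt_add_one_iff.1 <| hI.2.lt_iff_lt.1 (h.trans_lt (hI.mem_Ico_intervalIndex k).2)

end IsIntervalPartition

section Density

variable {Z : Set ℕ} {J : ℕ → ℕ} {ε : ℝ} {k₀ : ℕ}

lemma ncard_inter_Iio_le_of_blocks (hJ : IsIntervalPartition J) (hε : 0 ≤ ε)
    (hfull : ∀ k ≥ k₀, ((Z ∩ Ico (J k) (J (k + 1))).ncard : ℝ) ≤ ε * (J (k + 1) - J k))
    (hpart : ∀ k ≥ k₀, ∀ n ∈ Ico (J k) (J (k + 1)),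
      ((Z ∩ Ico (J k) n).ncard : ℝ) ≤ ε * (n - J k) + 1)
    {n : ℕ} (hn : J k₀ ≤ n) :
    ((Z ∩ Iio n).ncard : ℝ) ≤ J k₀ + 1 + ε * n := by
  have hsplit {a b : ℕ} (h : a ≤ b) :
      ((Z ∩ Iio b).ncard : ℝ) ≤ (Z ∩ Iio a).ncard + (Z ∩ Ico a b).ncard := by
    exact_mod_cast ncard_inter_Iio_le_add_s13 Z h
  have hprefix : ∀ k ≥ k₀, ((Z ∩ Iio (J k)).ncard : ℝ) ≤ J k₀ + ε * (J k - J k₀) := by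
    intro k hk
    induction k, hk using Nat.le_induction with
    | base =>
      have := ncard_le_ncard (inter_subset_right (s := Z)) (finite_Iio (J k₀))
      rw [ncard_Iio_nat] at this
      simpa using (Nat.cast_le (α := ℝ)).2 this
    | succ k hk ih =>
      calc _ ≤ _ := hsplit (hJ.2.monotone k.le_succ)
        _ ≤ J k₀ + ε * (J k - J k₀) + ε * (J (k + 1) - J k) := add_le_add ih (hfull k hk)
        _ = J k₀ + ε * (J (k + 1) - J k₀) := by ring
  set K := intervalIndex J n
  have hK := hJ.mem_Ico_intervalIndex n
  have hk₀K : k₀ ≤ K := hJ.le_intervalIndex hn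
  have hJk₀ : (0 : ℝ) ≤ J k₀ := Nat.cast_nonneg _
  calc _ ≤ _ := hsplit hK.1
    _ ≤ J k₀ + ε * (J K - J k₀) + (ε * (n - J K) + 1) :=
      add_le_add (hprefix K hk₀K) (hpart K hk₀K n hK)
    _ ≤ J k₀ + 1 + ε * n := by nlinarith

theorem densityZero_of_blocks (hJ : IsIntervalPartition J)
    (h : ∀ ε > 0, ∃ k₀,
      (∀ k ≥ k₀, ((Z ∩ Ico (J k) (J (k + 1))).ncard : ℝ) ≤ ε * (J (k + 1) - J k)) ∧
      ∀ k ≥ k₀, ∀ n ∈ Ico (J k) (J (k + 1)),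
        ((Z ∩ Ico (J k) n).ncard : ℝ) ≤ ε * (n - J k) + 1) :
    DensityZero Z := by
  rw [DensityZero, NormedAddGroup.tendsto_nhds_zero]
  intro ε hε
  obtain ⟨k₀, hfull, hpart⟩ := h (ε / 2) (half_pos hε)
  filter_upwards [eventually_ge_atTop (J k₀), eventually_gt_atTop 0,
    (tendsto_const_div_atTop_nhds_zero_nat ((J k₀ : ℝ) + 1)).eventually_lt_const (half_pos hε)]
    with n hn hn0 hsmall
  have hbound := ncard_inter_Iio_le_of_blocks hJ (half_pos hε).le hfull hpart hn
  have hn0' : (0 : ℝ) < n := by exact_mod_cast hn0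
  rw [div_lt_iff₀ hn0'] at hsmall
  rw [Real.norm_of_nonneg (by positivity), div_lt_iff₀ hn0']
  linarith

end Density

namespace TreeSystem

variable {J l : ℕ → ℕ} {A : ℕ → List Bool → Set ℕ} {k x : ℕ} {σ ρ : List Bool}

lemma nil_eq (hA : TreeSystem J l A) (k : ℕ) : A k [] = Ico (J k) (J (k + 1)) := by
  rw [← ((hA k).1 0 (Nat.zero_le _)).1]
  simp [List.length_eq_zero_iff]

lemma subset_Ico (hA : TreeSystem J l A) (hσ : σ.length ≤ l k) :
    A k σ ⊆ Ico (J k) (J (k + 1)) :=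
  hA.nil_eq k ▸ (hA k).2.2.1 [] σ hσ List.nil_prefix

lemma finite (hA : TreeSystem J l A) (hσ : σ.length ≤ l k) : (A k σ).Finite :=
  (finite_Ico _ _).subset (hA.subset_Ico hσ)

lemma nonempty (hA : TreeSystem J l A) (hσ : σ.length ≤ l k) : (A k σ).Nonempty :=
  nonempty_of_ncard_ne_zero (by rw [(hA k).2.1 σ hσ]; positivity)

lemma eq_of_mem_of_mem (hA : TreeSystem J l A) (hρ : ρ.length ≤ l k)
    (hlen : σ.length = ρ.length) (hxσ : x ∈ A k σ) (hxρ : x ∈ A k ρ) : σ = ρ := by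
  by_contra h
  exact ((hA k).1 ρ.length hρ).2 σ ρ hlen rfl h |>.ne_of_mem hxσ hxρ rfl

lemma eq_append_singleton_of_mem (hA : TreeSystem J l A) (hσ : σ.length ≤ l k)
    (hlen : σ.length = ρ.length + 1) (hxσ : x ∈ A k σ) (hxρ : x ∈ A k ρ) :
    ∃ b, σ = ρ ++ [b] := by
  have htake : σ.take ρ.length = ρ :=
    hA.eq_of_mem_of_mem (by omega) (by simp; omega)
      ((hA k).2.2.1 _ σ hσ (List.take_prefix _ _) hxσ) hxρ
  obtain ⟨b, hb⟩ : ∃ b, σ.drop ρ.length = [b] :=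
    List.length_eq_one_iff.1 (by simp [hlen])
  exact ⟨b, by rw [← List.take_append_drop ρ.length σ, htake, hb]⟩

lemma exists_mem_append_singleton (hA : TreeSystem J l A) (hρ : ρ.length < l k)
    (hx : x ∈ A k ρ) : ∃ b, x ∈ A k (ρ ++ [b]) := by
  have hxJ := hA.subset_Ico hρ.le hx
  rw [← ((hA k).1 (ρ.length + 1) hρ).1] at hxJ
  simp only [mem_iUnion, exists_prop] at hxJ
  obtain ⟨σ, hσ : σ.length = ρ.length + 1, hxσ⟩ := hxJ
  obtain ⟨b, rfl⟩ := hA.eq_append_singleton_of_mem (by omega) hσ hxσ hx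
  exact ⟨b, hxσ⟩

lemma pow_mul_ncard_le (hA : TreeSystem J l A) (hJl : J (k + 1) - J k = 2 ^ l k)
    (hρ : ρ.length ≤ l k) {S : Set ℕ} (hS : S ⊆ A k ρ) :
    2 ^ ρ.length * S.ncard ≤ J (k + 1) - J k := by
  calc 2 ^ ρ.length * S.ncard ≤ 2 ^ ρ.length * (A k ρ).ncard :=
        Nat.mul_le_mul_left _ (ncard_le_ncard hS (hA.finite hρ))
    _ = J (k + 1) - J k := by rw [(hA k).2.1 ρ hρ, ← pow_add, hJl]; congr 1; omega

lemma ncard_le_of_subset_Iio (hA : TreeSystem J l A) (hρ₁ : 1 ≤ ρ.length)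
    (hρ : ρ.length ≤ l k) {S : Set ℕ} {n : ℕ} (hS : S ⊆ A k ρ ∩ Iio n) :
    S.ncard ≤ (n - J k) / 2 ^ (ρ.length - 1) + 1 := by
  refine ncard_le_div_add_one_of_le_sub (by positivity)
    (fun x hx => ⟨(hA.subset_Ico hρ (hS hx).1).1, (hS hx).2⟩) fun i hi j hj hij => ?_
  have hsep := (hA k).2.2.2 ρ hρ i (hS hi).1 j (hS hj).1 hij.ne
  rw [show (ρ.length : ℤ) - 1 = ((ρ.length - 1 : ℕ) : ℤ) by omega, zpow_natCast, abs_sub_comm,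
    abs_of_nonneg (by simpa using hij.le)] at hsep
  have : ((2 ^ (ρ.length - 1) : ℕ) : ℝ) < ((j - i : ℕ) : ℝ) := by
    push_cast [hij.le]
    exact hsep
  exact_mod_cast this.le

end TreeSystem

section ZSet

variable {I J l : ℕ → ℕ} {A : ℕ → List Bool → Set ℕ} {f : ℕ → ℕ} {k : ℕ}

theorem MemFJA.exists_superlevel_subset (hA : TreeSystem J l A) (hf : MemFJA J l A f)
    {t : ℕ} (ht : t ≤ l k) :
    ∃ ρ : List Bool, ρ.length = t ∧ Ico (J k) (J (k + 1)) ∩ {m | t ≤ f m} ⊆ A k ρ := by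
  induction t with
  | zero => exact ⟨[], rfl, fun m hm => hA.nil_eq k ▸ hm.1⟩
  | succ t ih =>
    obtain ⟨ρ, hρ, hsub⟩ := ih (by omega)
    -- the level set `{f = t}` is the child `ρ ++ [b]`, so `{f > t}` lies in `ρ ++ [!b]`
    obtain ⟨σ, hσ, hlevel⟩ := (hf k).1 t (by omega)
    obtain ⟨x, hx⟩ := hA.nonempty (k := k) (σ := σ) (by omega)
    have hxρ : x ∈ A k ρ := by
      rw [← hlevel] at hx
      exact hsub ⟨hx.2, hx.1.symm.le⟩
    obtain ⟨b, rfl⟩ := hA.eq_append_singleton_of_mem (by omega) (by omega) hx hxρ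
    refine ⟨ρ ++ [!b], by simp [hρ], fun m ⟨hmJ, hmf⟩ => ?_⟩
    have hmf : t + 1 ≤ f m := hmf
    obtain ⟨c, hc⟩ := hA.exists_mem_append_singleton (by omega) (hsub ⟨hmJ, t.le_succ.trans hmf⟩)
    have hcb : c ≠ b := by
      rintro rfl
      rw [← hlevel] at hc
      have : f m = t := hc.1
      omega
    rwa [← Bool.eq_not_of_ne hcb]

lemma intervalIndex_le_of_mem_ZSet (hI : IsIntervalPartition I) (hJ : IsIntervalPartition J)
    {m : ℕ} (hm : m ∈ ZSet I J f) (hmk : m ∈ Ico (J k) (J (k + 1))) :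
    intervalIndex I k ≤ f m := by
  simp only [ZSet, mem_iUnion] at hm
  obtain ⟨L, k', hk', hmk', hLf⟩ := hm
  obtain rfl := hJ.eq_of_mem_Ico hmk hmk'
  rwa [hI.intervalIndex_eq hk']

lemma exists_ZSet_inter_Ico_subset (hI : IsIntervalPartition I) (hJ : IsIntervalPartition J)
    (hl : ∀ k, k ≤ l k) (hA : TreeSystem J l A) (hf : MemFJA J l A f) (k : ℕ) :
    ∃ ρ : List Bool, ρ.length = intervalIndex I k ∧
      ZSet I J f ∩ Ico (J k) (J (k + 1)) ⊆ A k ρ := by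
  obtain ⟨ρ, hρ, hsub⟩ := hf.exists_superlevel_subset hA ((intervalIndex_le I k).trans (hl k))
  exact ⟨ρ, hρ, fun m hm => hsub ⟨hm.2, intervalIndex_le_of_mem_ZSet hI hJ hm.1 hm.2⟩⟩

lemma ncard_ZSet_inter_block_le (hI : IsIntervalPartition I) (hJ : IsIntervalPartition J)
    (hl : ∀ k, k ≤ l k) (hJl : ∀ k, J (k + 1) - J k = 2 ^ l k) (hA : TreeSystem J l A)
    (hf : MemFJA J l A f) (k : ℕ) :
    ((ZSet I J f ∩ Ico (J k) (J (k + 1))).ncard : ℝ) ≤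
      (1 / 2) ^ intervalIndex I k * (J (k + 1) - J k) := by
  obtain ⟨ρ, hρ, hsub⟩ := exists_ZSet_inter_Ico_subset hI hJ hl hA hf k
  have key := Nat.cast_le (α := ℝ) |>.2 <|
    hρ ▸ hA.pow_mul_ncard_le (hJl k) (hρ ▸ (intervalIndex_le I k).trans (hl k)) hsub
  push_cast [hJ.2.monotone k.le_succ] at key
  rw [div_pow, one_pow, one_div_mul_eq_div, le_div_iff₀ (by positivity)]
  linarith

lemma ncard_ZSet_inter_partial_block_le (hI : IsIntervalPartition I) (hJ : IsIntervalPartition J)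
    (hl : ∀ k, k ≤ l k) (hA : TreeSystem J l A) (hf : MemFJA J l A f)
    (hk : 1 ≤ intervalIndex I k) {n : ℕ} (hn : n ∈ Ico (J k) (J (k + 1))) :
    ((ZSet I J f ∩ Ico (J k) n).ncard : ℝ) ≤
      (1 / 2) ^ (intervalIndex I k - 1) * (n - J k) + 1 := by
  obtain ⟨ρ, hρ, hsub⟩ := exists_ZSet_inter_Ico_subset hI hJ hl hA hf k
  have key := hA.ncard_le_of_subset_Iio (hρ ▸ hk) (hρ ▸ (intervalIndex_le I k).trans (hl k))
    (S := ZSet I J f ∩ Ico (J k) n) (n := n)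
    fun m hm => ⟨hsub ⟨hm.1, hm.2.1, hm.2.2.trans hn.2⟩, hm.2.2⟩
  rw [hρ] at key
  calc ((ZSet I J f ∩ Ico (J k) n).ncard : ℝ)
      ≤ (((n - J k) / 2 ^ (intervalIndex I k - 1) : ℕ) : ℝ) + 1 := by exact_mod_cast key
    _ ≤ ((n - J k : ℕ) : ℝ) / ((2 ^ (intervalIndex I k - 1) : ℕ) : ℝ) + 1 := by
      gcongr; exact Nat.cast_div_le
    _ = (1 / 2) ^ (intervalIndex I k - 1) * (n - J k) + 1 := by
      push_cast [hn.1]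
      simp only [one_div, inv_pow]
      ring

end ZSet

/-- Lemma: for any interval partitions `I`, `J`, tree system `Ā` for `J`, and
`f ∈ F_{J,Ā}`, the set `Z_{I,J,f}` has asymptotic density zero. -/
theorem stmt13 (J : ℕ → ℕ) (hJ : IsIntervalPartition J) (l : ℕ → ℕ)
    (hl : ∀ n : ℕ, 0 < l n ∧ n ≤ l n ∧ J (n + 1) - J n = 2 ^ l n)
    (A : ℕ → List Bool → Set ℕ) (hA : TreeSystem J l A)
    (f : ℕ → ℕ) (hf : MemFJA J l A f)
    (I : ℕ → ℕ) (hI : IsIntervalPartition I) :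
    DensityZero (ZSet I J f) := by
  have hlk : ∀ k, k ≤ l k := fun k => (hl k).2.1
  refine densityZero_of_blocks hJ fun ε hε => ?_
  obtain ⟨s, hs⟩ := exists_pow_lt_of_lt_one hε (by norm_num : (1 / 2 : ℝ) < 1)
  have hsmall {t : ℕ} (ht : s ≤ t) : (1 / 2 : ℝ) ^ t ≤ ε :=
    (pow_le_pow_of_le_one (by norm_num) (by norm_num) ht).trans hs.le
  refine ⟨I (s + 1), fun k hk => ?_, fun k hk n hn => ?_⟩
  · have hJk : (J k : ℝ) ≤ J (k + 1) := by exact_mod_cast hJ.2.monotone k.le_succ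
    refine (ncard_ZSet_inter_block_le hI hJ hlk (fun k => (hl k).2.2) hA hf k).trans ?_
    gcongr
    exact hsmall (by have := hI.le_intervalIndex hk; omega)
  · have ht := hI.le_intervalIndex hk
    have hnk : (J k : ℝ) ≤ n := by exact_mod_cast hn.1
    refine (ncard_ZSet_inter_partial_block_le hI hJ hlk hA hf (by omega) hn).trans ?_
    gcongr
    exact hsmall (by omega)
end

section
/- Let J be an interval partition with |J_n| = 2^{l_n}, l_n > 0, l_n ≥ n for each n, let Ā be a tree system for J, and let f ∈ F_{J,Ā}. Let B be a family of interval partitions such that for every interval partition K there exists I ∈ B with infinitely many n admitting some k > n with K_k ⊆ I_n. Suppose X ⊆ ℕ is such that X ∩ Z_{I,J,f} is finite for every I ∈ B. Then the image f''X is bounded, i.e., there exists n with f''X ⊆ {0,…,n−1}. -/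
open Filter Set Cardinal

/-- Lemma: if `B` is a family of interval partitions absorbing (with index shift)
infinitely many intervals of every interval partition, `f ∈ F_{J,Ā}`, and `X ⊆ ℕ` meets
each `Z_{I,J,f}` (for `I ∈ B`) in a finite set, then `f''X` is bounded. -/
theorem stmt14 (J : ℕ → ℕ) (hJ : IsIntervalPartition J) (l : ℕ → ℕ)
    (hl : ∀ n : ℕ, 0 < l n ∧ n ≤ l n ∧ J (n + 1) - J n = 2 ^ l n)
    (A : ℕ → List Bool → Set ℕ) (hA : TreeSystem J l A)
    (f : ℕ → ℕ) (hf : MemFJA J l A f)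
    (B : Set (ℕ → ℕ)) (hB : ∀ I ∈ B, IsIntervalPartition I)
    (habs : ∀ K : ℕ → ℕ, IsIntervalPartition K → ∃ I ∈ B,
      {n : ℕ | ∃ k > n, Set.Ico (K k) (K (k + 1)) ⊆ Set.Ico (I n) (I (n + 1))}.Infinite)
    (X : Set ℕ) (hX : ∀ I ∈ B, (X ∩ ZSet I J f).Finite) :
    ∃ n : ℕ, ∀ x ∈ X, f x < n := by
  classical
  by_contra hcon
  push_neg at hcon
  obtain ⟨hJ0, hJmono⟩ := hJ
  set kappa : ℕ → ℕ := fun x => Nat.findGreatest (fun k => J k ≤ x) (x + 1) with hkappa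
  have hk_le : ∀ x, J (kappa x) ≤ x := by
    intro x
    exact Nat.findGreatest_spec (P := fun k => J k ≤ x) (n := x + 1) (m := 0) (Nat.zero_le _) (show J 0 ≤ x by rw [hJ0]; exact Nat.zero_le x)
  have hk_lt : ∀ x, x < J (kappa x + 1) := by
    intro x
    have hle : kappa x ≤ x := by
      by_contra h
      push_neg at h
      have h1 : kappa x ≤ x + 1 := Nat.findGreatest_le _
      have h2 : kappa x = x + 1 := le_antisymm h1 h
      have h3 := hk_le x
      rw [h2] at h3
      exact absurd h3 (not_le.mpr (lt_of_lt_of_le (Nat.lt_succ_self x)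
        (hJmono.le_apply)))
    by_contra h
    push_neg at h
    exact Nat.findGreatest_is_greatest (P := fun k => J k ≤ x) (n := x + 1)
      (k := kappa x + 1) (Nat.lt_succ_self _) (by omega) h
  have ex : ∀ m N : ℕ, ∃ x, x ∈ X ∧ m ≤ f x ∧ N ≤ kappa x := by
    intro m N
    by_contra h
    push_neg at h
    obtain ⟨x, hxX, hfx⟩ := hcon (max m ((Finset.range (J N)).sup f + 1))
    have hm : m ≤ f x := le_trans (le_max_left _ _) hfx
    have hm2 : (Finset.range (J N)).sup f + 1 ≤ f x := le_trans (le_max_right _ _) hfx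
    have hkx : kappa x < N := h x hxX hm
    have hxlt : x < J N := lt_of_lt_of_le (hk_lt x) (hJmono.monotone (by omega))
    have : f x ≤ (Finset.range (J N)).sup f := Finset.le_sup (Finset.mem_range.mpr hxlt)
    omega
  choose g hgX hgf hgk using ex
  let K : ℕ → ℕ := fun k => Nat.rec 0 (fun k ih => kappa (g k ih) + 1) k
  have hK0 : K 0 = 0 := rfl
  have hKsucc : ∀ k, K (k + 1) = kappa (g k (K k)) + 1 := fun k => rfl
  have hKmono : StrictMono K := strictMono_nat_of_lt_succ (fun k => by
    rw [hKsucc]; exact Nat.lt_succ_of_le (hgk k (K k)))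
  obtain ⟨I, hIB, hinf⟩ := habs K ⟨hK0, hKmono⟩
  obtain ⟨hI0, hImono⟩ := hB I hIB
  set S := {n : ℕ | ∃ k > n, Set.Ico (K k) (K (k + 1)) ⊆ Set.Ico (I n) (I (n + 1))} with hS
  have key : ∀ n ∈ S, ∃ x, (x ∈ X ∩ ZSet I J f) ∧ kappa x ∈ Set.Ico (I n) (I (n + 1)) := by
    intro n hn
    obtain ⟨k, hkgt, hsub⟩ := hn
    refine ⟨g k (K k), ⟨hgX k (K k), ?_⟩, ?_⟩
    · refine Set.mem_iUnion.mpr ⟨n, ⟨kappa (g k (K k)), ?_, ⟨hk_le _, hk_lt _⟩, ?_⟩⟩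
      · exact hsub ⟨hgk k (K k), by rw [hKsucc]; exact Nat.lt_succ_self _⟩
      · exact le_trans (le_of_lt hkgt) (hgf k (K k))
    · exact hsub ⟨hgk k (K k), by rw [hKsucc]; exact Nat.lt_succ_self _⟩
  choose! x hx1 hx2 using key
  have hinj : Set.InjOn x S := by
    intro n hn m hm hxy
    by_contra hne
    have h1 := hx2 n hn
    have h2 := hx2 m hm
    rw [hxy] at h1
    rcases lt_or_gt_of_ne hne with hlt | hlt
    · have : I (n + 1) ≤ I m := hImono.monotone (Nat.succ_le_of_lt hlt)
      obtain ⟨_, h1b⟩ := h1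
      obtain ⟨h2a, _⟩ := h2
      omega
    · have : I (m + 1) ≤ I n := hImono.monotone (Nat.succ_le_of_lt hlt)
      obtain ⟨h1a, _⟩ := h1
      obtain ⟨_, h2b⟩ := h2
      omega
  have himg : x '' S ⊆ X ∩ ZSet I J f := by
    rintro y ⟨n, hn, rfl⟩
    exact hx1 n hn
  exact ((hinf.image hinj).mono himg) (hX I hIB)
end

section
/- Z₀ is a P-ideal: for every countable collection {a_n : n < ω} of subsets of ℕ each of asymptotic density zero, there exists a set a ⊆ ℕ of asymptotic density zero such that a_n ∖ a is finite for every n. -/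
open Filter Set Cardinal

/-!
Replacing `a n` by `a 0 ∪ ⋯ ∪ a n` we may assume the sets increase. Choose
thresholds `N 0 < N 1 < ⋯` such that `a k` has relative density at most `1 / (k + 1)` on every
initial segment `[0, n)` with `n ≥ N k`, and glue the tails: `b = ⋃ k, a k ∩ [N k, ∞)`.
Each `a k \ b` lies in `[0, N k)`. If `N j ≤ n < N (j + 1)`, then `b ∩ [0, n) ⊆ a j`, so the
relative density of `b` on `[0, n)` is at most `1 / (j + 1)`, and `j → ∞` as `n → ∞`.
-/

lemma densityZero_iff_eventually_le {A : Set ℕ} :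
    DensityZero A ↔
      ∀ k : ℕ, ∀ᶠ n in atTop, ((A ∩ Iio n).ncard : ℝ) / n ≤ 1 / (k + 1) := by
  refine ⟨fun hA k => hA.eventually (ge_mem_nhds (by positivity)), fun h => ?_⟩
  refine tendsto_order.2 ⟨fun x hx => Eventually.of_forall fun n => hx.trans_le (by positivity),
    fun ε hε => ?_⟩
  obtain ⟨k, hk⟩ := exists_nat_one_div_lt hε
  exact (h k).mono fun n hn => hn.trans_lt hk

lemma DensityZero.union {A B : Set ℕ} (hA : DensityZero A) (hB : DensityZero B) :
    DensityZero (A ∪ B) := by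
  refine squeeze_zero (fun n => by positivity) (fun n => ?_) (by simpa using hA.add hB)
  rw [← add_div, union_inter_distrib_right]
  gcongr
  exact_mod_cast ncard_union_le _ _

lemma DensityZero.accumulate {a : ℕ → Set ℕ} (ha : ∀ n, DensityZero (a n)) (k : ℕ) :
    DensityZero (Set.accumulate a k) := by
  induction k with
  | zero => simpa [accumulate_zero_nat] using ha 0
  | succ k ih => simpa [accumulate_succ] using ih.union (ha (k + 1))

lemma StrictMono.exists_le_lt_succ {N : ℕ → ℕ} (hN : StrictMono N) {k n : ℕ} (hk : N k ≤ n) :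
    ∃ j, k ≤ j ∧ N j ≤ n ∧ n < N (j + 1) := by
  by_contra! h
  have hle : ∀ j, k ≤ j → N j ≤ n := fun j hj => Nat.le_induction hk h j hj
  have := hN.le_apply (x := n + k + 1)
  have := hle (n + k + 1) (by omega)
  omega

lemma exists_densityZero_of_monotone {c : ℕ → Set ℕ} (hc : Monotone c)
    (h : ∀ k, DensityZero (c k)) :
    ∃ b : Set ℕ, DensityZero b ∧ ∀ k, (c k \ b).Finite := by
  obtain ⟨N, hN, hNc⟩ : ∃ N : ℕ → ℕ, StrictMono N ∧
      ∀ k, ∀ n ≥ N k, ((c k ∩ Iio n).ncard : ℝ) / n ≤ 1 / (k + 1) :=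
    extraction_forall_of_eventually fun k =>
      eventually_forall_ge_atTop.2 (densityZero_iff_eventually_le.1 (h k) k)
  refine ⟨⋃ k, c k ∩ Ici (N k), densityZero_iff_eventually_le.2 fun k => ?_, fun k => ?_⟩
  · filter_upwards [eventually_ge_atTop (N k)] with n hn
    obtain ⟨j, hkj, hjn, hnj⟩ := hN.exists_le_lt_succ hn
    have hsub : (⋃ i, c i ∩ Ici (N i)) ∩ Iio n ⊆ c j ∩ Iio n := by
      rintro m ⟨hm, hmn⟩
      obtain ⟨i, hmi, him⟩ := mem_iUnion.1 hm
      have hij : i < j + 1 := hN.lt_iff_lt.1 ((mem_Ici.1 him).trans_lt (hmn.trans hnj))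
      exact ⟨hc (Nat.lt_succ_iff.1 hij) hmi, hmn⟩
    calc _ ≤ ((c j ∩ Iio n).ncard : ℝ) / n := by
          gcongr
          exact (finite_Iio n).inter_of_right _
      _ ≤ 1 / (j + 1) := hNc j n hjn
      _ ≤ 1 / (k + 1) := by gcongr
  · refine (finite_Iio (N k)).subset fun m ⟨hm, hmb⟩ => ?_
    by_contra hkm
    exact hmb (mem_iUnion.2 ⟨k, hm, mem_Ici.2 (not_lt.1 hkm)⟩)

/-- `Z₀` is a P-ideal: every countable collection of density-zero sets is almost
contained in a single density-zero set. -/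
theorem stmt18 (a : ℕ → Set ℕ) (ha : ∀ n : ℕ, DensityZero (a n)) :
    ∃ b : Set ℕ, DensityZero b ∧ ∀ n : ℕ, (a n \ b).Finite := by
  obtain ⟨b, hb, hfin⟩ := exists_densityZero_of_monotone monotone_accumulate
    (DensityZero.accumulate ha)
  exact ⟨b, hb, fun n => (hfin n).subset (sdiff_subset_sdiff_left subset_accumulate)⟩
end
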